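/- arXiv:2401.02603 — 16 statements merged into one kernel-verified Lean document; each statement's English description precedes it below -/
import Mathlib

section
/- Let κ be an uncountable cardinal and let {P_α : α < κ} be a family of directed sets. Then the full product ∏_{α<κ} P_α, with the coordinatewise partial order, has calibre (ω₁,ω) if and only if (1) for every countable subset A of κ the subproduct ∏_{α∈A} P_α has calibre (ω₁,ω), and (2) the set {α < κ : P_α is not countably directed} is countable. -/
open Cardinal Set

/-- A directed set has calibre `(ω₁,ω)` if every uncountable subset contains an
infinite subset which is bounded (has an upper bound). -/
def CalibreO1O (P : Type*) [Preorder P] : Prop :=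
  ∀ S : Set P, ¬ S.Countable → ∃ T ⊆ S, T.Infinite ∧ BddAbove T

/-- A directed set is countably directed if every countable subset is bounded. -/
def CountablyDirected (P : Type*) [Preorder P] : Prop :=
  ∀ S : Set P, S.Countable → BddAbove S

/-!
Necessity. Calibre `(ω₁,ω)` passes along monotone surjections, hence to every subproduct.
A directed set that is not countably directed carries a sequence `t` such that each element
bounds only finitely many of its terms. If uncountably many factors were of this kind, index
them onto the countable ordinals `δ < ω₁`, fix injections `E_δ : [0, δ) → ℕ` and put
`x_ξ(δ) = t_δ (E_δ ξ)`. A countable set of indices `ξ` lies below some `δ < ω₁`, where `E_δ`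
separates them, so no infinite countable subfamily of `(x_ξ)_{ξ < ω₁}` is bounded, and the
uncountable set of the `x_ξ` contradicts calibre.

Sufficiency. Let `C` be the countable set of factors that are not countably directed. An
uncountable subset of the product has either an uncountable fibre or an uncountable image
under the restriction to `∏_{i ∈ C} P i`; in both cases it contains a countably infinite set
whose restriction is bounded, and countable directedness bounds it on the other coordinates.
-/

universe u

open Ordinal Function

theorem Set.Countable.of_countable_image_of_countable_fibers {α β : Type*} {f : α → β}
    {S : Set α} (himg : (f '' S).Countable) (hfib : ∀ y, (S ∩ f ⁻¹' {y}).Countable) :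
    S.Countable :=
  (himg.biUnion fun y _ => hfib y).mono fun p hp =>
    mem_biUnion (mem_image_of_mem f hp) (show p ∈ S ∩ f ⁻¹' {f p} from ⟨hp, rfl⟩)

theorem Ordinal.countable_Iio_of_lt_omega_one {o : Ordinal} (ho : o < ω₁) :
    (Iio o).Countable := by
  rw [← le_aleph0_iff_set_countable, Cardinal.mk_Iio_ordinal, lift_le_aleph0, ← lt_aleph_one_iff]
  exact lt_omega_iff_card_lt.1 ho

theorem Ordinal.not_countable_Iio_omega_one : ¬ (Iio (ω₁ : Ordinal)).Countable := by
  rw [← le_aleph0_iff_set_countable, Cardinal.mk_Iio_ordinal, card_omega, lift_le_aleph0, not_le]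
  exact aleph0_lt_aleph_one

theorem Ordinal.exists_lt_omega_one_forall_lt {B : Set Ordinal} (hB : B.Countable)
    (hBω₁ : B ⊆ Iio ω₁) : ∃ o < ω₁, B ⊆ Iio o := by
  have := hB.to_subtype
  refine ⟨⨆ ξ : B, Order.succ ξ.1,
    iSup_lt_omega_one fun ξ => (isSuccLimit_omega 1).succ_lt (hBω₁ ξ.2), fun ξ hξ => ?_⟩
  exact (Order.lt_succ ξ).trans_le (Ordinal.le_iSup (fun ξ : B => Order.succ ξ.1) ⟨ξ, hξ⟩)

theorem Ordinal.exists_range_eq_Iio_omega_one (α : Type u) [Uncountable α] :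
    ∃ ρ : α → Ordinal.{u}, range ρ = Iio ω₁ := by
  obtain ⟨f⟩ : Nonempty (Iio (ω₁ : Ordinal.{u}) ↪ α) := by
    rw [← lift_mk_le', Cardinal.mk_Iio_ordinal, card_omega]
    simp only [lift_aleph, lift_one, aleph_one_le_iff, aleph0_lt_lift, aleph0_lt_mk]
  have : Nonempty (Iio (ω₁ : Ordinal.{u})) := ⟨⟨0, omega_pos 1⟩⟩
  refine ⟨fun a => ((invFun f a : Iio ω₁) : Ordinal),
    Subset.antisymm (range_subset_iff.2 fun a => (invFun f a).2)
      fun o ho => ⟨f ⟨o, ho⟩, congrArg Subtype.val (leftInverse_invFun f.injective _)⟩⟩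

theorem CalibreO1O.of_surjective {P Q : Type*} [Preorder P] [Preorder Q] (h : CalibreO1O P)
    {f : P → Q} (hf : Monotone f) (hsurj : Surjective f) : CalibreO1O Q := by
  intro S hS
  have hS_eq : S = f '' (surjInv hsurj '' S) := by
    rw [image_image]
    simp only [surjInv_eq, image_id']
  obtain ⟨T, hTS, hT, hTb⟩ := h _ fun hc => hS (hS_eq ▸ hc.image f)
  have hinj : InjOn f (surjInv hsurj '' S) := by
    rintro _ ⟨a, -, rfl⟩ _ ⟨b, -, rfl⟩ hab
    rw [surjInv_eq hsurj, surjInv_eq hsurj] at hab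
    rw [hab]
  exact ⟨f '' T, hS_eq ▸ image_mono hTS, hT.image (hinj.mono hTS), hf.map_bddAbove hTb⟩

theorem CalibreO1O.pi_subtype {ι : Type*} {P : ι → Type*} [∀ i, Preorder (P i)]
    [∀ i, Nonempty (P i)] (h : CalibreO1O (∀ i, P i)) (A : Set ι) :
    CalibreO1O (∀ a : A, P a) := by
  classical
  refine h.of_surjective (f := A.domRestrict) (fun f g hfg a => hfg a) fun g => ?_
  exact ⟨fun i => if hi : i ∈ A then g ⟨i, hi⟩ else Classical.arbitrary _,
    funext fun a => dif_pos a.2⟩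

theorem CalibreO1O.exists_countable_infinite_bddAbove_image {P Q : Type*} [Preorder Q]
    (hQ : CalibreO1O Q) (f : P → Q) {S : Set P} (hS : ¬ S.Countable) :
    ∃ T ⊆ S, T.Countable ∧ T.Infinite ∧ BddAbove (f '' T) := by
  suffices ∃ R ⊆ S, R.Infinite ∧ BddAbove (f '' R) by
    obtain ⟨R, hRS, hR, hRb⟩ := this
    obtain ⟨T, hTR, hTc, hT⟩ := hR.exists_subset_countable_infinite
    exact ⟨T, hTR.trans hRS, hTc, hT, hRb.mono (image_mono hTR)⟩
  by_cases hfS : (f '' S).Countable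
  · obtain ⟨y, hy⟩ : ∃ y, ¬ (S ∩ f ⁻¹' {y}).Countable := by
      by_contra! h
      exact hS (hfS.of_countable_image_of_countable_fibers h)
    exact ⟨_, inter_subset_left, fun h => hy h.countable,
      bddAbove_singleton.mono (image_subset_iff.2 inter_subset_right)⟩
  · obtain ⟨T, hTS, hT, hTb⟩ := hQ _ hfS
    refine ⟨S ∩ f ⁻¹' T, inter_subset_left, ?_, hTb.mono (image_subset_iff.2 inter_subset_right)⟩
    exact Infinite.of_image f (by rwa [image_inter_preimage, inter_eq_right.2 hTS])

theorem not_calibreO1O_of_forall_not_bddAbove_image {P W : Type*} [Preorder P] {D : Set W}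
    (hD : ¬ D.Countable) (x : W → P)
    (hx : ∀ B ⊆ D, B.Countable → B.Infinite → ¬ BddAbove (x '' B)) : ¬ CalibreO1O P := by
  have hfin : ∀ y, (D ∩ x ⁻¹' {y}).Finite := by
    intro y
    by_contra hinf
    obtain ⟨B, hB, hBc, hBi⟩ := Infinite.exists_subset_countable_infinite hinf
    exact hx B (hB.trans inter_subset_left) hBc hBi
      (bddAbove_singleton.mono (image_subset_iff.2 (hB.trans inter_subset_right)))
  intro hcal
  obtain ⟨T, hTD, hT, hTb⟩ :=
    hcal _ fun h => hD (h.of_countable_image_of_countable_fibers fun y => (hfin y).countable)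
  have hDT : (D ∩ x ⁻¹' T).Infinite :=
    Infinite.of_image x (by rwa [image_inter_preimage, inter_eq_right.2 hTD])
  obtain ⟨B, hB, hBc, hBi⟩ := hDT.exists_subset_countable_infinite
  exact hx B (hB.trans inter_subset_left) hBc hBi
    (hTb.mono (image_subset_iff.2 (hB.trans inter_subset_right)))

theorem exists_seq_finite_setOf_le_of_not_countablyDirected {Q : Type*} [Preorder Q]
    [IsDirected Q (· ≤ ·)] [Nonempty Q] (h : ¬ CountablyDirected Q) :
    ∃ t : ℕ → Q, ∀ u, {n | t n ≤ u}.Finite := by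
  obtain ⟨D, hD, hDu⟩ : ∃ D : Set Q, D.Countable ∧ ¬ BddAbove D := by
    simpa [CountablyDirected] using h
  obtain ⟨d, rfl⟩ := hD.exists_eq_range (nonempty_of_not_bddAbove hDu)
  choose t ht using fun n => ((finite_Iic n).image d).bddAbove
  refine ⟨t, fun u => not_not.1 fun hinf => hDu ⟨u, ?_⟩⟩
  rintro _ ⟨k, rfl⟩
  obtain ⟨n, hn, hkn⟩ := Infinite.exists_gt hinf k
  exact (ht n (mem_image_of_mem d hkn.le)).trans hn

theorem not_calibreO1O_pi_of_range_eq_Iio_omega_one {κ : Type*} {Q : κ → Type*}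
    [∀ k, Preorder (Q k)] {ρ : κ → Ordinal} (hρ : range ρ = Iio ω₁) (t : ∀ k, ℕ → Q k)
    (ht : ∀ k u, {n | t k n ≤ u}.Finite) : ¬ CalibreO1O (∀ k, Q k) := by
  choose E hE using fun k =>
    countable_iff_exists_injOn.1 (countable_Iio_of_lt_omega_one (hρ ▸ mem_range_self k))
  refine not_calibreO1O_of_forall_not_bddAbove_image not_countable_Iio_omega_one
    (fun ξ k => t k (E k ξ)) ?_
  rintro B hBω₁ hB hBinf ⟨u, hu⟩
  obtain ⟨o, ho, hBo⟩ := exists_lt_omega_one_forall_lt hB hBω₁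
  obtain ⟨k, rfl⟩ : o ∈ range ρ := hρ ▸ ho
  exact infinite_of_injOn_mapsTo ((hE k).mono hBo)
    (fun ξ hξ => hu (mem_image_of_mem _ hξ) k) hBinf (ht k (u k))

theorem CalibreO1O.countable_setOf_not_countablyDirected {ι : Type*} {P : ι → Type*}
    [∀ i, Preorder (P i)] [∀ i, IsDirected (P i) (· ≤ ·)] [∀ i, Nonempty (P i)]
    (h : CalibreO1O (∀ i, P i)) : {i | ¬ CountablyDirected (P i)}.Countable := by
  by_contra hC
  set C := {i | ¬ CountablyDirected (P i)}
  have : Uncountable C := ⟨fun h => hC (countable_coe_iff.1 h)⟩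
  obtain ⟨ρ, hρ⟩ := exists_range_eq_Iio_omega_one C
  choose t ht using fun a : C => exists_seq_finite_setOf_le_of_not_countablyDirected a.2
  exact not_calibreO1O_pi_of_range_eq_Iio_omega_one hρ t ht (h.pi_subtype C)

theorem CalibreO1O.pi_of_pi_subtype {ι : Type*} {P : ι → Type*} [∀ i, Preorder (P i)]
    {A : Set ι} (hA : CalibreO1O (∀ a : A, P a)) (hcd : ∀ i ∉ A, CountablyDirected (P i)) :
    CalibreO1O (∀ i, P i) := by
  intro S hS
  obtain ⟨T, hTS, hT, hTinf, hTb⟩ :=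
    hA.exists_countable_infinite_bddAbove_image A.domRestrict hS
  refine ⟨T, hTS, hTinf, bddAbove_pi.2 fun i => ?_⟩
  by_cases hi : i ∈ A
  · simpa [image_image] using (monotone_eval (⟨i, hi⟩ : A)).map_bddAbove hTb
  · exact hcd i hi _ (hT.image _)

theorem uncountable_product_calibre_general
    {ι : Type*}
    (P : ι → Type*) [∀ i, PartialOrder (P i)]
    (hdir : ∀ i, ∀ F : Set (P i), F.Finite → BddAbove F) :
    CalibreO1O (∀ i, P i) ↔
      ((∀ A : Set ι, A.Countable → CalibreO1O (∀ a : A, P ↑a)) ∧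
        {i : ι | ¬ CountablyDirected (P i)}.Countable) := by
  have (i : ι) : Nonempty (P i) := (hdir i ∅ finite_empty).nonempty
  have (i : ι) : IsDirected (P i) (· ≤ ·) := ⟨fun a b => by
    obtain ⟨c, hc⟩ := hdir i {a, b} (toFinite _)
    exact ⟨c, hc (by simp), hc (by simp)⟩⟩
  exact ⟨fun h => ⟨fun A _ => h.pi_subtype A, h.countable_setOf_not_countablyDirected⟩,
    fun ⟨hA, hC⟩ => (hA _ hC).pi_of_pi_subtype fun i hi => not_not.1 hi⟩

/-- For an uncountable cardinal `κ` and a family of directed sets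
`{P_α : α < κ}`, the full product has calibre `(ω₁,ω)` iff every countable
subproduct has calibre `(ω₁,ω)` and all but countably many factors are
countably directed. -/
theorem uncountable_product_calibre
    {ι : Type*} (κ : Cardinal) (hκ : ℵ₀ < κ) (hι : #ι = κ)
    (P : ι → Type*) [∀ i, PartialOrder (P i)]
    (hdir : ∀ i, ∀ F : Set (P i), F.Finite → BddAbove F) :
    CalibreO1O (∀ i, P i) ↔
      ((∀ A : Set ι, A.Countable → CalibreO1O (∀ a : A, P ↑a)) ∧
        {i : ι | ¬ CountablyDirected (P i)}.Countable) :=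
  uncountable_product_calibre_general P hdir
end

section
/- The directed set ω^{ω₁} of all functions from ω₁ (the countable ordinals) to ℕ, with the pointwise order, does not have calibre (ω₁,ω): there exists an uncountable family {f_α : α < ω₁} of such functions no infinite subset of which has an upper bound in ω^{ω₁}. -/
/-!
For each `β < ω₁` fix an injection `e β` of the countable interval `[0, β]` into `ℕ`, and let
`f α β = e β α` for `α ≤ β`. Two distinct `α < α'` are separated at the coordinate `α'`.
If `g` bounds `f α` for all `α ∈ T`, then for every `β` the values `f α β`, `α ∈ T ∩ [0, β]`,
are distinct and at most `g β`, so `T ∩ [0, β]` is finite. Since `ω₁` is regular, a countably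
infinite subset of `T` is bounded by some `β`, hence `T` is finite. The uncountably many
distinct `f α` then witness the failure of calibre `(ω₁, ω)`.
-/

open Cardinal Set

/-- The set of countable ordinals, `ω₁`. -/
abbrev Omega1 : Type 1 := {o : Ordinal.{0} // o < (Cardinal.aleph 1).ord}

open Function Ordinal

theorem not_calibreO1O_of_injective {ι P : Type*} [Uncountable ι] [Preorder P] {f : ι → P}
    (hf : Injective f) (hunbdd : ∀ T : Set ι, T.Infinite → ¬ BddAbove (f '' T)) :
    ¬ CalibreO1O P := by
  intro hcal
  have hrange : ¬ (range f).Countable := fun h ↦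
    not_countable_univ (by simpa using h.preimage hf)
  obtain ⟨T, hTf, hT, hbdd⟩ := hcal (range f) hrange
  exact hunbdd (f ⁻¹' T) (hT.preimage hTf) (by rwa [image_preimage_eq_of_subset hTf])

section Coding

variable {ι : Type*} [LinearOrder ι] {e : ∀ β : ι, Iic β → ℕ}

def codingFamily (e : ∀ β : ι, Iic β → ℕ) (α β : ι) : ℕ :=
  if h : α ≤ β then e β ⟨α, h⟩ else 0

theorem codingFamily_of_le {α β : ι} (h : α ≤ β) : codingFamily e α β = e β ⟨α, h⟩ :=
  dif_pos h

theorem injOn_codingFamily_Iic (he : ∀ β, Injective (e β)) (β : ι) :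
    InjOn (codingFamily e · β) (Iic β) := by
  intro α hα α' hα' h
  simp only [codingFamily_of_le hα, codingFamily_of_le hα'] at h
  exact congrArg Subtype.val (he β h)

theorem codingFamily_injective (he : ∀ β, Injective (e β)) : Injective (codingFamily e) := by
  intro α α' h
  rcases le_total α α' with hle | hle
  · exact injOn_codingFamily_Iic he α' hle le_rfl (congrFun h α')
  · exact injOn_codingFamily_Iic he α le_rfl hle (congrFun h α)

theorem finite_inter_Iic_of_bddAbove_image_codingFamily (he : ∀ β, Injective (e β)) {T : Set ι}
    (hT : BddAbove (codingFamily e '' T)) (β : ι) : (T ∩ Iic β).Finite := by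
  obtain ⟨g, hg⟩ := hT
  refine Finite.of_finite_image ((finite_Iic (g β)).subset ?_)
    ((injOn_codingFamily_Iic he β).mono inter_subset_right)
  rintro _ ⟨α, hα, rfl⟩
  exact hg (mem_image_of_mem _ hα.1) β

theorem not_bddAbove_image_codingFamily (he : ∀ β, Injective (e β))
    (hctbl : ∀ s : Set ι, s.Countable → BddAbove s) {T : Set ι} (hT : T.Infinite) :
    ¬ BddAbove (codingFamily e '' T) := by
  intro hbdd
  obtain ⟨S, hST, hS, hSinf⟩ := hT.exists_subset_countable_infinite
  obtain ⟨β, hβ⟩ := hctbl S hS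
  exact hSinf ((finite_inter_Iic_of_bddAbove_image_codingFamily he hbdd β).subset
    (subset_inter hST hβ))

end Coding

instance : Uncountable Omega1 := by
  change Uncountable (Iio (aleph 1).ord)
  rw [← aleph0_lt_mk_iff, Cardinal.mk_Iio_ordinal, card_ord, aleph0_lt_lift]
  exact aleph0_lt_aleph_one

theorem Omega1.countable_Iic (β : Omega1) : (Iic β).Countable := by
  have hsucc : Order.succ β.1 < (aleph 1).ord :=
    (isSuccLimit_ord (aleph0_le_aleph 1)).succ_lt β.2
  refine MapsTo.countable_of_injOn (f := Subtype.val) (t := Iio (Order.succ β.1))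
    (fun _ hα ↦ Order.lt_succ_of_le (α := Ordinal) hα) Subtype.val_injective.injOn ?_
  rw [← le_aleph0_iff_set_countable, Cardinal.mk_Iio_ordinal, lift_le_aleph0,
    ← lt_aleph_one_iff]
  exact lt_ord.mp hsucc

theorem Omega1.bddAbove_of_countable {s : Set Omega1} (hs : s.Countable) : BddAbove s := by
  have := hs.to_subtype
  have hlt : ⨆ α : s, α.1.1 < (aleph 1).ord := by
    simpa only [ord_aleph] using iSup_lt_omega_one fun α : s ↦ ord_aleph 1 ▸ α.1.2
  exact ⟨⟨_, hlt⟩, fun α hα ↦ Ordinal.le_iSup (fun α : s ↦ α.1.1) ⟨α, hα⟩⟩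

/-- `ω^{ω₁}`, the functions from the countable ordinals to `ℕ` with
the pointwise order, does not have calibre `(ω₁,ω)`: there is an uncountable
family `{f_α : α < ω₁}` no infinite subset of which is bounded. -/
theorem omega_pow_omega1_not_calibre :
    (¬ CalibreO1O (Omega1 → ℕ)) ∧
    ∃ f : Omega1 → (Omega1 → ℕ), Function.Injective f ∧
      ∀ T : Set Omega1, T.Infinite → ¬ BddAbove (f '' T) := by
  choose e he using fun β : Omega1 ↦
    Set.countable_iff_exists_injective.mp (Omega1.countable_Iic β)
  have hunbdd : ∀ T : Set Omega1, T.Infinite → ¬ BddAbove (codingFamily e '' T) :=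
    fun _ ↦ not_bddAbove_image_codingFamily he fun _ ↦ Omega1.bddAbove_of_countable
  exact ⟨not_calibreO1O_of_injective (codingFamily_injective he) hunbdd,
    codingFamily e, codingFamily_injective he, hunbdd⟩
end

section
/- Let {P_α : α < κ} be a family of topological directed sets, each with a minimum element, such that each P_α is cosmic (has a countable network of closed sets) and CSBS. Then the Σ-product ∑_α P_α has calibre (ω₁,ω). -/
open Cardinal Set

/-- A family `𝒞` is a network for `X` if whenever `x ∈ U` with `U` open, there
is `C ∈ 𝒞` with `x ∈ C ⊆ U`. -/
def IsNetwork {X : Type*} [TopologicalSpace X] (𝒞 : Set (Set X)) : Prop :=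
  ∀ x : X, ∀ U : Set X, IsOpen U → x ∈ U → ∃ C ∈ 𝒞, x ∈ C ∧ C ⊆ U

/-- A space is cosmic if it has a countable network of closed sets. -/
def Cosmic (X : Type*) [TopologicalSpace X] : Prop :=
  ∃ 𝒞 : Set (Set X), 𝒞.Countable ∧ (∀ C ∈ 𝒞, IsClosed C) ∧ IsNetwork 𝒞

/-- A topological directed set is CSBS if every convergent sequence has a
subsequence which is bounded in the directed set. -/
def CSBS (P : Type*) [Preorder P] [TopologicalSpace P] : Prop :=
  ∀ (x : ℕ → P) (p : P), Filter.Tendsto x Filter.atTop (nhds p) →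
    ∃ φ : ℕ → ℕ, StrictMono φ ∧ BddAbove (Set.range (x ∘ φ))
/-!
Given an uncountable `S`, close a countable `M ⊆ S` under the constraints `x i ∈ C`, where `i`
ranges over the supports of points of `M` and `C` over a countable network of `P i`, so that any
finitely many constraints met by a point `p ∈ S \ M` are met by infinitely many points of `M`.
A sequence of distinct points of `M` then converges to `p` in every coordinate of the countable
set `J` of coordinates used by `M`, and vanishes off `J`. A diagonal argument applying CSBS to the
countably many coordinates in `J` yields a subsequence bounded in the Σ-product.
-/

open Filter Topology

theorem isDirectedOrder_of_forall_finite_bddAbove {α : Type*} [Preorder α]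
    (h : ∀ F : Set α, F.Finite → BddAbove F) : IsDirectedOrder α where
  directed a b := by
    obtain ⟨c, hc⟩ := h {a, b} (toFinite _)
    exact ⟨c, hc (by simp), hc (by simp)⟩

/- Diagonal argument: refine along a decreasing chain of infinite sets `A n`, one step for
each index, and take `ψ n ∈ A n`; the range of `ψ` then lies in each `A n` up to finitely
many terms. -/
theorem Nat.exists_strictMono_forall_of_refine {κ : Type*} [Countable κ]
    (Q : κ → Set ℕ → Prop)
    (hrefine : ∀ k A, A.Infinite → ∃ B ⊆ A, B.Infinite ∧ Q k B)
    (hsubset : ∀ k A B, B ⊆ A → Q k A → Q k B)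
    (hunion : ∀ k A F, F.Finite → Q k A → Q k (A ∪ F)) :
    ∃ ψ : ℕ → ℕ, StrictMono ψ ∧ ∀ k, Q k (range ψ) := by
  rcases isEmpty_or_nonempty κ with hκ | hκ
  · exact ⟨id, strictMono_id, isEmptyElim⟩
  obtain ⟨e, he⟩ := exists_surjective_nat κ
  choose B hBA hBinf hQB using hrefine
  let A : ℕ → {A : Set ℕ // A.Infinite} := fun n =>
    Nat.rec ⟨univ, infinite_univ⟩ (fun k A => ⟨B (e k) A.1 A.2, hBinf _ _ _⟩) n
  have hA : Antitone fun n => (A n).1 := antitone_nat_of_succ_le fun n => hBA _ _ _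
  obtain ⟨ψ, hψ, hψA⟩ := extraction_forall_of_frequently fun n =>
    Nat.frequently_atTop_iff_infinite.2 (A n).2
  refine ⟨ψ, hψ, fun k => ?_⟩
  obtain ⟨n, rfl⟩ := he k
  have hrange : range ψ ⊆ (A (n + 1)).1 ∪ ψ '' Iio (n + 1) := by
    rintro _ ⟨m, rfl⟩
    rcases lt_or_ge m (n + 1) with h | h
    · exact Or.inr ⟨m, h, rfl⟩
    · exact Or.inl (hA h (hψA m))
  exact hsubset _ _ _ hrange (hunion _ _ _ ((finite_Iio _).image ψ) (hQB _ _ _))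

theorem CSBS.pi {κ : Type*} [Countable κ] {α : κ → Type*} [∀ k, Preorder (α k)]
    [∀ k, IsDirectedOrder (α k)] [∀ k, TopologicalSpace (α k)] (h : ∀ k, CSBS (α k)) :
    CSBS (∀ k, α k) := by
  intro x p hx
  have : ∀ k, Nonempty (α k) := fun k => ⟨p k⟩
  have hrefine : ∀ k A, A.Infinite →
      ∃ B ⊆ A, B.Infinite ∧ BddAbove ((fun n => x n k) '' B) := by
    intro k A hA
    have hnth := Nat.nth_strictMono hA
    obtain ⟨φ, hφ, hb⟩ := h k (fun n => x (Nat.nth (· ∈ A) n) k) (p k)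
      ((tendsto_pi_nhds.1 hx k).comp hnth.tendsto_atTop)
    refine ⟨range (Nat.nth (· ∈ A) ∘ φ), ?_,
      infinite_range_of_injective (hnth.comp hφ).injective, ?_⟩
    · rintro _ ⟨n, rfl⟩
      exact Nat.nth_mem_of_infinite hA _
    · rwa [← range_comp]
  obtain ⟨ψ, hψ, hbdd⟩ := Nat.exists_strictMono_forall_of_refine _ hrefine
    (fun k A B hBA hA => hA.mono (image_mono hBA))
    (fun k A F hF hA => by rw [image_union]; exact hA.union (hF.image _).bddAbove)
  refine ⟨ψ, hψ, bddAbove_range_pi.2 fun k => ?_⟩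
  have hk := hbdd k
  rw [← range_comp] at hk
  exact hk

instance Filter.isCountablyGenerated_cofinite {α : Type*} [Countable α] :
    (cofinite : Filter α).IsCountablyGenerated :=
  HasCountableBasis.isCountablyGenerated ⟨hasBasis_cofinite, Set.Countable.ofPred_finite⟩

theorem exists_seq_tendsto_cofinite_inf {X : Type*} {M : Set X} (hM : M.Countable)
    (l : Filter X) [l.IsCountablyGenerated] (h : ∀ U ∈ l, (M ∩ U).Infinite) :
    ∃ s : ℕ → X, (∀ n, s n ∈ M) ∧ Tendsto s atTop (cofinite ⊓ l) := by
  have := hM.to_subtype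
  have : (cofinite ⊓ comap ((↑) : M → X) l).NeBot := by
    refine (hasBasis_cofinite.inf (l.basis_sets.comap ((↑) : M → X))).neBot_iff.2
      fun {F} ⟨hF, hU⟩ => ?_
    have : (((↑) : M → X) ⁻¹' F.2).Infinite := by
      refine fun hfin => h F.2 hU ?_
      simpa [Set.inter_comm] using hfin.image ((↑) : M → X)
    exact (this.sdiff hF).nonempty.mono fun x hx => ⟨hx.2, hx.1⟩
  obtain ⟨s, hs⟩ := exists_seq_tendsto (cofinite ⊓ comap ((↑) : M → X) l)
  refine ⟨fun n => s n, fun n => (s n).2, ?_⟩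
  exact (tendsto_inf.2 ⟨Subtype.val_injective.tendsto_cofinite.comp (tendsto_inf_left tendsto_id),
    tendsto_comap.comp (tendsto_inf_right tendsto_id)⟩).comp hs

theorem Filter.Tendsto.infinite_range_of_cofinite {α X : Type*} {l : Filter α} [l.NeBot]
    {f : α → X} (hf : Tendsto f l cofinite) : (range f).Infinite := fun hfin =>
  let ⟨a, ha⟩ := (hf.eventually_mem hfin.compl_mem_cofinite).exists
  ha (mem_range_self a)

theorem IsNetwork.tendsto_nhds_of_eventually_mem {X α : Type*} [TopologicalSpace X]
    {𝒞 : Set (Set X)} (h𝒞 : IsNetwork 𝒞) {l : Filter α} {f : α → X} {a : X}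
    (hf : ∀ C ∈ 𝒞, a ∈ C → ∀ᶠ n in l, f n ∈ C) : Tendsto f l (𝓝 a) :=
  tendsto_nhds.2 fun U hU haU =>
    let ⟨C, hC, haC, hCU⟩ := h𝒞 a U hU haU
    mem_of_superset (hf C hC haC) fun _ hn => hCU hn

theorem exists_countable_subset_closed {X Y : Type*} (S : Set X) (B : X → Set Y)
    (hB : ∀ x, (B x).Countable) (G : Set Y → Set X) (hG : ∀ Φ, (G Φ).Countable)
    (hGS : ∀ Φ, G Φ ⊆ S) :
    ∃ M ⊆ S, M.Countable ∧
      ∀ Φ : Set Y, Φ.Finite → Φ ⊆ ⋃ x ∈ M, B x → G Φ ⊆ M := by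
  let step : Set X → Set X := fun A =>
    A ∪ ⋃ Φ ∈ {Φ : Set Y | Φ.Finite ∧ Φ ⊆ ⋃ x ∈ A, B x}, G Φ
  let A : ℕ → Set X := fun n => step^[n] ∅
  have hA_succ : ∀ n, A (n + 1) = step (A n) := fun n => Function.iterate_succ_apply' step n ∅
  have hA_mono : Monotone A :=
    monotone_nat_of_le_succ fun n => (hA_succ n).symm ▸ subset_union_left
  have hA_countable : ∀ n, (A n).Countable := by
    intro n
    induction n with
    | zero => exact countable_empty
    | succ n ih =>
      rw [hA_succ]
      exact ih.union ((countable_ofPred_finite_subset (ih.biUnion fun x _ => hB x)).biUnion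
        fun Φ _ => hG Φ)
  have hA_subset : ∀ n, A n ⊆ S := by
    intro n
    induction n with
    | zero => exact empty_subset _
    | succ n ih =>
      rw [hA_succ]
      exact union_subset ih (iUnion₂_subset fun Φ _ => hGS Φ)
  refine ⟨⋃ n, A n, iUnion_subset hA_subset, countable_iUnion hA_countable,
    fun Φ hΦ hΦA => ?_⟩
  rw [biUnion_iUnion, ← hΦ.coe_toFinset] at hΦA
  have hdir : Directed (· ⊆ ·) fun n => ⋃ x ∈ A n, B x :=
    Monotone.directed_le fun m n hmn => biUnion_mono (hA_mono hmn) fun _ _ => subset_rfl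
  obtain ⟨n, hn⟩ := hdir.exists_mem_subset_of_finset_subset_biUnion hΦA
  rw [hΦ.coe_toFinset] at hn
  refine subset_iUnion_of_subset (n + 1) ?_
  rw [hA_succ]
  exact subset_union_of_subset_right (subset_biUnion_of_mem (u := G)
    (show Φ ∈ {Φ : Set Y | Φ.Finite ∧ Φ ⊆ ⋃ x ∈ A n, B x} from ⟨hΦ, hn⟩)) _

/- Close `M` under `Φ ↦ D (S ∩ ⋂₀ Φ)`, where `D T` is `T` itself if `T` is countable and a
countably infinite subset of `T` otherwise; a point of `S \ M` in `⋂₀ Φ` rules out the first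
case. -/
theorem exists_countable_subset_infinite_sInter {X : Type*} (S : Set X) (B : X → Set (Set X))
    (hB : ∀ x, (B x).Countable) :
    ∃ M ⊆ S, M.Countable ∧ ∀ Φ : Set (Set X), Φ.Finite → Φ ⊆ ⋃ x ∈ M, B x →
      ∀ p ∈ S \ M, p ∈ ⋂₀ Φ → (M ∩ ⋂₀ Φ).Infinite := by
  have hD : ∀ T : Set X, ∃ D ⊆ T, D.Countable ∧ (D = T ∨ D.Infinite) := by
    intro T
    by_cases hT : T.Countable
    · exact ⟨T, subset_rfl, hT, Or.inl rfl⟩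
    · obtain ⟨D, hDT, hD, hDinf⟩ :=
        Infinite.exists_subset_countable_infinite fun h : T.Finite => hT h.countable
      exact ⟨D, hDT, hD, Or.inr hDinf⟩
  choose D hDT hDc hDT' using hD
  obtain ⟨M, hMS, hMc, hM⟩ := exists_countable_subset_closed S B hB
    (fun Φ => D (S ∩ ⋂₀ Φ)) (fun _ => hDc _) (fun _ => (hDT _).trans inter_subset_left)
  refine ⟨M, hMS, hMc, fun Φ hΦ hΦM p hp hpΦ => ?_⟩
  have hDM := hM Φ hΦ hΦM
  rcases hDT' (S ∩ ⋂₀ Φ) with heq | hinf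
  · exact absurd (hDM (by rw [heq]; exact ⟨hp.1, hpΦ⟩)) hp.2
  · exact hinf.mono (subset_inter hDM ((hDT _).trans inter_subset_right))

abbrev SigmaProduct {ι : Type*} (P : ι → Type*) [∀ i, Bot (P i)] : Type _ :=
  {p : ∀ i, P i // {i | p i ≠ ⊥}.Countable}

namespace SigmaProduct

variable {ι : Type*} {P : ι → Type*} [∀ i, PartialOrder (P i)] [∀ i, OrderBot (P i)]

theorem exists_strictMono_bddAbove [∀ i, IsDirectedOrder (P i)] [∀ i, TopologicalSpace (P i)]
    (hcsbs : ∀ i, CSBS (P i)) {J : Set ι} (hJ : J.Countable) (s : ℕ → SigmaProduct P)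
    (hsJ : ∀ n, ∀ i ∉ J, (s n).1 i = ⊥) (p : ∀ i, P i)
    (hsp : ∀ i ∈ J, Tendsto (fun n => (s n).1 i) atTop (𝓝 (p i))) :
    ∃ ψ : ℕ → ℕ, StrictMono ψ ∧ BddAbove (range (s ∘ ψ)) := by
  classical
  have := hJ.to_subtype
  obtain ⟨ψ, hψ, b, hb⟩ := CSBS.pi (fun j : J => hcsbs j) (fun n j => (s n).1 j)
    (fun j => p j) (tendsto_pi_nhds.2 fun j => hsp j j.2)
  let q : SigmaProduct P := ⟨fun i => if h : i ∈ J then b ⟨i, h⟩ else ⊥,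
    hJ.mono fun i hi => by_contra fun h => hi (dif_neg h)⟩
  refine ⟨ψ, hψ, q, ?_⟩
  rintro _ ⟨n, rfl⟩ i
  by_cases hi : i ∈ J
  · simpa [q, hi] using hb ⟨n, rfl⟩ ⟨i, hi⟩
  · simp [q, hi, hsJ (ψ n) i hi]

theorem exists_seq_tendsto_cofinite [∀ i, TopologicalSpace (P i)] (hcos : ∀ i, Cosmic (P i))
    {S : Set (SigmaProduct P)} (hS : ¬ S.Countable) :
    ∃ s : ℕ → SigmaProduct P, (∀ n, s n ∈ S) ∧ Tendsto s atTop cofinite ∧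
      ∃ J : Set ι, J.Countable ∧ (∀ n, ∀ i ∉ J, (s n).1 i = ⊥) ∧
        ∃ p : ∀ i, P i, ∀ i ∈ J, Tendsto (fun n => (s n).1 i) atTop (𝓝 (p i)) := by
  choose 𝒞 h𝒞c _ h𝒞 using hcos
  let cyl (i : ι) (C : Set (P i)) : Set (SigmaProduct P) := {x | x.1 i ∈ C}
  let B (x : SigmaProduct P) : Set (Set (SigmaProduct P)) :=
    ⋃ i ∈ {i | x.1 i ≠ ⊥}, cyl i '' 𝒞 i
  have hB : ∀ x, (B x).Countable := fun x => x.2.biUnion fun i _ => (h𝒞c i).image _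
  obtain ⟨M, hMS, hMc, hM⟩ := exists_countable_subset_infinite_sInter S B hB
  obtain ⟨p, hp⟩ : (S \ M).Nonempty := sdiff_nonempty.2 fun h => hS (hMc.mono h)
  let 𝒟 := {E ∈ ⋃ x ∈ M, B x | p ∈ E}
  have : (generate 𝒟).IsCountablyGenerated :=
    ⟨⟨𝒟, (hMc.biUnion fun x _ => hB x).mono (sep_subset _ _), rfl⟩⟩
  obtain ⟨s, hsM, hs⟩ := exists_seq_tendsto_cofinite_inf hMc (generate 𝒟) fun U hU => by
    obtain ⟨Φ, hΦ𝒟, hΦ, hΦU⟩ := mem_generate_iff.1 hU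
    exact (hM Φ hΦ (fun E hE => (hΦ𝒟 hE).1) p hp fun E hE => (hΦ𝒟 hE).2).mono
      (inter_subset_inter_right _ hΦU)
  refine ⟨s, fun n => hMS (hsM n), (tendsto_inf.1 hs).1, ⋃ x ∈ M, {i | x.1 i ≠ ⊥},
    hMc.biUnion fun x _ => x.2, fun n i hi => by_contra fun h => hi (mem_biUnion (hsM n) h),
    p.1, fun i hi => (h𝒞 i).tendsto_nhds_of_eventually_mem fun C hC hpC => ?_⟩
  obtain ⟨x, hx, hix⟩ := mem_iUnion₂.1 hi
  exact (tendsto_inf.1 hs).2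
    (mem_generate_of_mem ⟨mem_biUnion hx (mem_biUnion hix ⟨C, hC, rfl⟩), hpC⟩)

end SigmaProduct

/-- the Σ-product of a family of cosmic CSBS topological directed
sets (each with a minimum element) has calibre `(ω₁,ω)`. -/
theorem sigma_product_cosmic_CSBS {ι : Type*} (P : ι → Type*)
    [∀ i, PartialOrder (P i)] [∀ i, OrderBot (P i)] [∀ i, TopologicalSpace (P i)]
    (hdir : ∀ i, ∀ F : Set (P i), F.Finite → BddAbove F)
    (hcos : ∀ i, Cosmic (P i)) (hcsbs : ∀ i, CSBS (P i)) :
    CalibreO1O {p : ∀ i, P i // {i | p i ≠ ⊥}.Countable} := by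
  have := fun i => isDirectedOrder_of_forall_finite_bddAbove (hdir i)
  intro S hS
  obtain ⟨s, hsS, hs, J, hJ, hsJ, p, hsp⟩ := SigmaProduct.exists_seq_tendsto_cofinite hcos hS
  obtain ⟨ψ, hψ, hbdd⟩ := SigmaProduct.exists_strictMono_bddAbove hcsbs hJ s hsJ p hsp
  exact ⟨range (s ∘ ψ), range_subset_iff.2 fun n => hsS _,
    (hs.comp hψ.tendsto_atTop).infinite_range_of_cofinite, hbdd⟩
end

section
/- Let {P_α : α < κ} be a family of directed sets, each with a minimum element, such that for each α there is a directed set Q_α carrying a topology which is cosmic (has a countable network of closed sets) and CSBS, and a family {P_{α,q} : q ∈ Q_α} of subsets of P_α covering P_α, with P_{α,q} ⊆ P_{α,q'} whenever q ≤ q' in Q_α, and with each P_{α,q} countably directed in itself (every countable subset of P_{α,q} has an upper bound in P_{α,q}). Then the Σ-product ∑_α P_α has calibre (ω₁,ω). -/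
/-!
Label each `a : P i` by some `q : Q i` with `a ∈ Pq i q`. For an uncountable `S` in the
Σ-product, first close off a countable set `D` of coordinates so that every finite set of
network constraints on coordinates in `D` that is met by uncountably many points of `S` is met by
infinitely many points of `S` supported in `D`. Counting shows that some `β ∈ S` is heavy: every
such constraint set met by the labels of `β` is met uncountably often. Distinct witnesses of ever
larger constraint sets met by `β` form an injective sequence supported in `D` whose labels converge
to those of `β` on `D`. A countable product of directed CSBS spaces is CSBS (diagonal argument),
so a subsequence has bounded labels on each coordinate of `D`; monotonicity and countable
directedness of the pieces bound it in each `P i`, and off `D` it is `⊥`.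
-/

open Cardinal Set

open Filter Topology Function

theorem bddAbove_range_of_bddAbove_range_add {α : Type*} [Preorder α] [IsDirectedOrder α]
    {x : ℕ → α} (n : ℕ) (h : BddAbove (range fun k => x (n + k))) : BddAbove (range x) := by
  obtain ⟨b, hb⟩ := h
  exact IsBoundedUnder.bddAbove_range
    ⟨b, eventually_map.2 (eventually_atTop.2 ⟨n, fun k hk => hb ⟨k - n, by simp [hk]⟩⟩)⟩

theorem exists_strictMono_diagonal {R : ℕ → (ℕ → ℕ) → Prop}
    (hR : ∀ n (φ : ℕ → ℕ), StrictMono φ → ∃ ψ, StrictMono ψ ∧ R n (φ ∘ ψ))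
    (hsub : ∀ n (φ ψ : ℕ → ℕ), StrictMono ψ → R n φ → R n (φ ∘ ψ)) :
    ∃ φ : ℕ → ℕ, StrictMono φ ∧ ∀ n, R n fun k => φ (n + k) := by
  choose ψ hψ hRψ using hR
  -- `f n` is the `n`-th nested subsequence; the diagonal `d k = f (k + 1) k` is, from index `n`
  -- on, a subsequence of `f (n + 1)`, which satisfies `R n`.
  let f : ℕ → {φ : ℕ → ℕ // StrictMono φ} := fun n =>
    Nat.rec (motive := fun _ => {φ : ℕ → ℕ // StrictMono φ}) ⟨id, strictMono_id⟩
      (fun n f => ⟨f.1 ∘ ψ n f.1 f.2, f.2.comp (hψ n _ _)⟩) n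
  have hf : ∀ n, (f (n + 1)).1 = (f n).1 ∘ ψ n (f n).1 (f n).2 := fun n => rfl
  have hnest : ∀ n m, n ≤ m → ∀ j, ∃ j', (f m).1 j = (f n).1 j' := by
    intro n m hnm
    induction m, hnm using Nat.le_induction with
    | base => exact fun j => ⟨j, rfl⟩
    | succ m _ ih => exact fun j => ih _
  let d : ℕ → ℕ := fun k => (f (k + 1)).1 k
  have hd : StrictMono d := strictMono_nat_of_lt_succ fun k =>
    calc d k < (f (k + 1)).1 (k + 1) := (f (k + 1)).2 k.lt_succ_self
      _ ≤ d (k + 1) := by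
        rw [show d (k + 1) = (f (k + 1)).1 (ψ _ _ _ (k + 1)) from congrFun (hf (k + 1)) (k + 1)]
        exact (f (k + 1)).2.monotone (hψ _ _ _).le_apply
  refine ⟨d, hd, fun n => ?_⟩
  choose ρ hρ using fun k => hnest (n + 1) (n + k + 1) (by omega) (n + k)
  have hρmono : StrictMono ρ := fun a b hab => (f (n + 1)).2.lt_iff_lt.1 <| by
    rw [← hρ, ← hρ]; exact hd (by omega)
  have : (fun k => d (n + k)) = (f (n + 1)).1 ∘ ρ := funext hρ
  rw [this]
  exact hsub n _ ρ hρmono (hRψ n _ _)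

theorem CSBS.pi_s3 {J : Type*} [Countable J] {Q : J → Type*} [∀ j, Preorder (Q j)]
    [∀ j, TopologicalSpace (Q j)] [∀ j, IsDirectedOrder (Q j)] (hQ : ∀ j, CSBS (Q j)) :
    CSBS (∀ j, Q j) := by
  intro x y hxy
  rcases isEmpty_or_nonempty J with hJ | hJ
  · exact ⟨id, strictMono_id, bddAbove_range_pi.2 fun j => isEmptyElim j⟩
  obtain ⟨e, he⟩ := exists_surjective_nat J
  obtain ⟨φ, hφ, hbdd⟩ := exists_strictMono_diagonal
    (R := fun n φ => BddAbove (range fun k => x (φ k) (e n)))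
    (fun n φ hφ => hQ (e n) _ _ ((tendsto_pi_nhds.1 hxy (e n)).comp hφ.tendsto_atTop))
    (fun n φ ψ _ h => h.mono (range_comp_subset_range ψ fun k => x (φ k) (e n)))
  exact ⟨φ, hφ, bddAbove_range_pi.2 (he.forall.2 fun n =>
    bddAbove_range_of_bddAbove_range_add n (hbdd n))⟩

section ClosingOff

variable {α ι Y : Type*}

theorem Set.Countable.setOf_finset_subset {s : Set α} (hs : s.Countable) :
    {F : Finset α | ↑F ⊆ s}.Countable :=
  ((countable_ofPred_finite_subset hs).preimage Finset.coe_injective).mono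
    fun F hF => show (F : Set α) ∈ {t | t.Finite ∧ t ⊆ s} from ⟨F.finite_toSet, hF⟩

theorem Set.Countable.exists_seq_finset_eventually_mem {s : Set α} (hs : s.Countable) :
    ∃ F : ℕ → Finset α, (∀ k, ↑(F k) ⊆ s) ∧ ∀ a ∈ s, ∀ᶠ k in atTop, a ∈ F k := by
  have := hs.to_subtype
  obtain ⟨G, hG⟩ := exists_seq_tendsto (atTop : Filter (Finset s))
  refine ⟨fun k => (G k).map (Embedding.subtype _), fun k => ?_, fun a ha => ?_⟩
  · simp
  · filter_upwards [tendsto_atTop.1 hG {⟨a, ha⟩}] with k hk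
    exact Finset.mem_map_of_mem (Embedding.subtype _) (hk (Finset.mem_singleton_self _))

theorem exists_injective_forall_mem {A : ℕ → Set α} (hA : ∀ n, (A n).Infinite) :
    ∃ f : ℕ → α, Injective f ∧ ∀ n, f n ∈ A n := by
  classical
  choose g hgA hg using fun n (t : Finset α) => (hA n).exists_notMem_finset t
  -- `used n = {f 0, …, f (n - 1)}`
  let used : ℕ → Finset α := fun n =>
    Nat.rec (motive := fun _ => Finset α) ∅ (fun m t => insert (g m t) t) n
  have hused : ∀ m n, m < n → g m (used m) ∈ used n := by
    intro m n hmn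
    induction n with
    | zero => omega
    | succ n ih =>
      rcases Nat.lt_succ_iff_lt_or_eq.1 hmn with h | rfl
      · exact Finset.mem_insert_of_mem (ih h)
      · exact Finset.mem_insert_self _ _
  refine ⟨fun n => g n (used n), Injective.of_lt_imp_ne fun m n hmn heq => ?_, fun n => hgA n _⟩
  exact hg n (used n) (heq ▸ hused m n hmn)

theorem exists_countable_closed_under (con : ι → Set α) (hcon : ∀ i, (con i).Countable)
    (r : Finset α → Set ι) (hr : ∀ F, (r F).Countable) :
    ∃ D : Set ι, D.Countable ∧ ∀ F : Finset α, ↑F ⊆ ⋃ i ∈ D, con i → r F ⊆ D := by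
  let step : Set ι → Set ι := fun E => E ∪ ⋃ F ∈ {F : Finset α | ↑F ⊆ ⋃ i ∈ E, con i}, r F
  let E : ℕ → Set ι := fun n => step^[n] ∅
  have hE : ∀ n, E (n + 1) = step (E n) := fun n => iterate_succ_apply' step n ∅
  have hEc : ∀ n, (E n).Countable := by
    intro n
    induction n with
    | zero => exact countable_empty
    | succ n ih =>
      rw [hE]
      exact ih.union ((ih.biUnion fun i _ => hcon i).setOf_finset_subset.biUnion fun F _ => hr F)
  have hEmono : Monotone E := monotone_nat_of_le_succ fun n => hE n ▸ subset_union_left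
  refine ⟨⋃ n, E n, countable_iUnion hEc, fun F hF => ?_⟩
  rw [biUnion_iUnion] at hF
  obtain ⟨n, hn⟩ := Directed.exists_mem_subset_of_finset_subset_biUnion
    (Monotone.directed_le fun m n h => biUnion_subset_biUnion_left (hEmono h)) hF
  calc r F ⊆ step (E n) := subset_union_right.trans' (subset_biUnion_of_mem (u := r) hn)
    _ = E (n + 1) := (hE n).symm
    _ ⊆ ⋃ n, E n := subset_iUnion E (n + 1)

theorem exists_mem_forall_not_countable_inter {S : Set Y} (hS : ¬ S.Countable)
    {𝒩 : Set (Set Y)} (h𝒩 : 𝒩.Countable) :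
    ∃ y ∈ S, ∀ N ∈ 𝒩, y ∈ N → ¬ (S ∩ N).Countable := by
  by_contra! h
  have hsmall : {N ∈ 𝒩 | (S ∩ N).Countable}.Countable := h𝒩.mono (sep_subset _ _)
  refine hS ((hsmall.biUnion fun N hN => hN.2).mono fun y hy => ?_)
  obtain ⟨N, hN, hyN, hc⟩ := h y hy
  exact mem_biUnion (x := N) ⟨hN, hc⟩ ⟨hy, hyN⟩

end ClosingOff

section SigmaProduct

variable {ι Y : Type*} {X : ι → Type*}

def cylinder (g : Y → ∀ i, X i) (F : Finset (Σ i, Set (X i))) : Set Y :=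
  {y | ∀ c ∈ F, g y c.1 ∈ c.2}

theorem exists_injective_seq_tendsto_of_countable_network [∀ i, TopologicalSpace (X i)]
    (hX : ∀ i, ∃ 𝒞 : Set (Set (X i)), 𝒞.Countable ∧ IsNetwork 𝒞)
    (g : Y → ∀ i, X i) (supp : Y → Set ι) (hsupp : ∀ y, (supp y).Countable)
    {S : Set Y} (hS : ¬ S.Countable) :
    ∃ D : Set ι, D.Countable ∧ ∃ p : ℕ → Y, Injective p ∧ (∀ k, p k ∈ S ∧ supp (p k) ⊆ D) ∧
      ∃ x : ∀ i, X i, ∀ i ∈ D, Tendsto (fun k => g (p k) i) atTop (𝓝 (x i)) := by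
  choose 𝒞 h𝒞c h𝒞 using hX
  let con : ι → Set (Σ i, Set (X i)) := fun i => Sigma.mk i '' 𝒞 i
  have hA : ∀ F, ∃ A ⊆ S ∩ cylinder g F, A.Countable ∧
      (¬ (S ∩ cylinder g F).Countable → A.Infinite) := by
    intro F
    by_cases h : (S ∩ cylinder g F).Countable
    · exact ⟨_, subset_rfl, h, absurd h⟩
    · obtain ⟨A, hA, hAc, hAi⟩ :=
        Set.Infinite.exists_subset_countable_infinite (mt Finite.countable h)
      exact ⟨A, hA, hAc, fun _ => hAi⟩
  choose A hAS hAc hAi using hA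
  obtain ⟨D, hDc, hD⟩ := exists_countable_closed_under con (fun i => (h𝒞c i).image _)
    (fun F => ⋃ y ∈ A F, supp y) (fun F => (hAc F).biUnion fun y _ => hsupp y)
  have hconD : (⋃ i ∈ D, con i).Countable := hDc.biUnion fun i _ => (h𝒞c i).image _
  obtain ⟨β, -, hβ⟩ := exists_mem_forall_not_countable_inter hS
    (hconD.setOf_finset_subset.image (cylinder g))
  let L := {c ∈ ⋃ i ∈ D, con i | g β c.1 ∈ c.2}
  have hL : L.Countable := hconD.mono (sep_subset _ _)
  obtain ⟨F, hFL, hF⟩ := hL.exists_seq_finset_eventually_mem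
  have hFD : ∀ k, ↑(F k) ⊆ ⋃ i ∈ D, con i := fun k => (hFL k).trans (sep_subset _ _)
  obtain ⟨p, hpinj, hpA⟩ := exists_injective_forall_mem fun k =>
    hAi (F k) (hβ _ ⟨F k, hFD k, rfl⟩ fun c hc => (hFL k hc).2)
  refine ⟨D, hDc, p, hpinj, fun k => ⟨(hAS _ (hpA k)).1, ?_⟩, fun i => g β i, fun i hi => ?_⟩
  · exact (subset_biUnion_of_mem (u := supp) (hpA k)).trans (hD (F k) (hFD k))
  · refine tendsto_nhds.2 fun U hU hβU => ?_
    obtain ⟨C, hC, hβC, hCU⟩ := h𝒞 i _ U hU hβU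
    filter_upwards [hF ⟨i, C⟩ ⟨mem_biUnion hi ⟨C, hC, rfl⟩, hβC⟩] with k hk
    exact hCU ((hAS _ (hpA k)).2 _ hk)

variable {P : ι → Type*} [∀ i, Preorder (P i)] [∀ i, OrderBot (P i)]

theorem bddAbove_of_forall_support_subset {D : Set ι} (hD : D.Countable)
    {T : Set {p : ∀ i, P i // {i | p i ≠ ⊥}.Countable}}
    (hsupp : ∀ p ∈ T, {i | p.1 i ≠ ⊥} ⊆ D) (hbdd : ∀ i ∈ D, BddAbove ((fun p => p.1 i) '' T)) :
    BddAbove T := by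
  classical
  choose b hb using hbdd
  refine ⟨⟨fun i => if hi : i ∈ D then b i hi else ⊥, hD.mono fun i hi => ?_⟩, fun p hp i => ?_⟩
  · by_contra h
    exact hi (dif_neg h)
  · by_cases hi : i ∈ D
    · simpa [hi] using hb i hi (mem_image_of_mem _ hp)
    · have : p.1 i = ⊥ := not_not.1 fun h => hi (hsupp p hp h)
      simp [hi, this]

end SigmaProduct

theorem sigma_product_type_cosmic_CSBS_countably_directed_general
    {ι : Type*} (P : ι → Type*)
    [∀ i, PartialOrder (P i)] [∀ i, OrderBot (P i)]
    (Q : ι → Type*) [∀ i, PartialOrder (Q i)] [∀ i, TopologicalSpace (Q i)]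
    (hQdir : ∀ i, ∀ F : Set (Q i), F.Finite → BddAbove F)
    (hQcos : ∀ i, Cosmic (Q i)) (hQcsbs : ∀ i, CSBS (Q i))
    (Pq : ∀ i, Q i → Set (P i))
    (hcover : ∀ i, (⋃ q, Pq i q) = Set.univ)
    (hmono : ∀ i, ∀ q q' : Q i, q ≤ q' → Pq i q ⊆ Pq i q')
    (hcd : ∀ i, ∀ q : Q i, ∀ S ⊆ Pq i q, S.Countable →
      ∃ b ∈ Pq i q, ∀ s ∈ S, s ≤ b) :
    CalibreO1O {p : ∀ i, P i // {i | p i ≠ ⊥}.Countable} := by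
  intro S hS
  choose label hlabel using fun i (a : P i) => mem_iUnion.1 (hcover i ▸ mem_univ a)
  have : ∀ i, IsDirectedOrder (Q i) := fun i => ⟨fun a b => by
    obtain ⟨c, hc⟩ := hQdir i {a, b} (toFinite _)
    exact ⟨c, hc (mem_insert a _), hc (mem_insert_of_mem a rfl)⟩⟩
  obtain ⟨D, hDc, p, hpinj, hpS, x, hx⟩ := exists_injective_seq_tendsto_of_countable_network
    (fun i => (hQcos i).imp fun 𝒞 h => ⟨h.1, h.2.2⟩) (fun a i => label i (a.1 i))
    (fun a => {i | a.1 i ≠ ⊥}) (fun a => a.2) hS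
  have := hDc.to_subtype
  obtain ⟨φ, hφ, hbdd⟩ := CSBS.pi_s3 (fun i : D => hQcsbs i) (fun k i => label i ((p k).1 i))
    (fun i => x i) (tendsto_pi_nhds.2 fun i => hx i i.2)
  refine ⟨range (p ∘ φ), range_subset_iff.2 fun k => (hpS _).1,
    infinite_range_of_injective (hpinj.comp hφ.injective),
    bddAbove_of_forall_support_subset hDc (forall_mem_range.2 fun k => (hpS _).2) fun i hi => ?_⟩
  obtain ⟨b, hb⟩ := bddAbove_range_pi.1 hbdd ⟨i, hi⟩
  obtain ⟨c, -, hc⟩ := hcd i b ((fun a => a.1 i) '' range (p ∘ φ))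
    (forall_mem_image.2 <| forall_mem_range.2 fun k => hmono i _ _ (hb ⟨k, rfl⟩) (hlabel i _))
    ((countable_range _).image _)
  exact ⟨c, hc⟩

/-- if each directed set `P_α` (with minimum) is covered by a
`Q_α`-ordered family of countably directed (in themselves) subsets, where each
`Q_α` is a cosmic CSBS topological directed set, then the Σ-product `∑_α P_α`
has calibre `(ω₁,ω)`. -/
theorem sigma_product_type_cosmic_CSBS_countably_directed
    {ι : Type*} (P : ι → Type*)
    [∀ i, PartialOrder (P i)] [∀ i, OrderBot (P i)]
    (hPdir : ∀ i, ∀ F : Set (P i), F.Finite → BddAbove F)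
    (Q : ι → Type*) [∀ i, PartialOrder (Q i)] [∀ i, TopologicalSpace (Q i)]
    (hQdir : ∀ i, ∀ F : Set (Q i), F.Finite → BddAbove F)
    (hQcos : ∀ i, Cosmic (Q i)) (hQcsbs : ∀ i, CSBS (Q i))
    (Pq : ∀ i, Q i → Set (P i))
    (hcover : ∀ i, (⋃ q, Pq i q) = Set.univ)
    (hmono : ∀ i, ∀ q q' : Q i, q ≤ q' → Pq i q ⊆ Pq i q')
    (hcd : ∀ i, ∀ q : Q i, ∀ S ⊆ Pq i q, S.Countable →
      ∃ b ∈ Pq i q, ∀ s ∈ S, s ≤ b) :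
    CalibreO1O {p : ∀ i, P i // {i | p i ≠ ⊥}.Countable} :=
  sigma_product_type_cosmic_CSBS_countably_directed_general P Q hQdir hQcos hQcsbs Pq hcover hmono
    hcd
end

section
/- Let κ ≥ λ ≥ μ ≥ ν be cardinals with κ regular. Let (P',P) and (Q',Q) be directed set pairs such that (P',P) has calibre (κ,λ,μ,ν) and (P',P) ≥_T (Q',Q). Then (Q',Q) has calibre (κ,λ,μ,ν). -/
open Cardinal Set

/-- `C` is cofinal for the pair `(P',P)` if every element of `P'` is below some
element of `C`. -/
def IsCofinalForPair {P : Type*} [Preorder P] (P' C : Set P) : Prop :=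
  ∀ p ∈ P', ∃ c ∈ C, p ≤ c

/-- `(P',P) ≥_T (Q',Q)`: there is a map `P → Q` taking sets cofinal for
`(P',P)` to sets cofinal for `(Q',Q)`. -/
def TukeyQuotient {P : Type*} {Q : Type*} [Preorder P] [Preorder Q]
    (P' : Set P) (Q' : Set Q) : Prop :=
  ∃ φ : P → Q, ∀ C : Set P, IsCofinalForPair P' C → IsCofinalForPair Q' (φ '' C)

/-- The pair `(P',P)` has calibre `(κ,λ,μ,ν)` if every `κ`-sized subset of `P'`
has a `λ`-sized subset `T` such that every `μ`-sized subset of `T` has a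
`ν`-sized subset bounded in `P`. -/
def PairCalibre {P : Type u} [Preorder P] (P' : Set P) (κ l m n : Cardinal.{u}) : Prop :=
  ∀ S : Set P, S ⊆ P' → #S = κ → ∃ T ⊆ S, #T = l ∧
    ∀ U ⊆ T, #U = m → ∃ V ⊆ U, #V = n ∧ BddAbove V

/-- Tukey quotients preserve calibre `(κ,λ,μ,ν)` for `κ` regular. -/
theorem tukey_preserves_calibre {P : Type u} {Q : Type u}
    [PartialOrder P] [PartialOrder Q]
    (hP : ∀ F : Set P, F.Finite → BddAbove F)
    (hQ : ∀ F : Set Q, F.Finite → BddAbove F)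
    (P' : Set P) (Q' : Set Q)
    (κ l m n : Cardinal.{u}) (hreg : κ.IsRegular)
    (hlκ : l ≤ κ) (hml : m ≤ l) (hnm : n ≤ m)
    (hcal : PairCalibre P' κ l m n) (hT : TukeyQuotient P' Q') :
    PairCalibre Q' κ l m n := by
  obtain ⟨φ, hφ⟩ := hT
  -- key: every q ∈ Q' has a "Tukey dual" point in P'
  have hg : ∀ q : Q, q ∈ Q' → ∃ p, p ∈ P' ∧ ∀ p₂, p ≤ p₂ → q ≤ φ p₂ := by
    intro q hq
    by_contra hcon
    push_neg at hcon
    have hC : IsCofinalForPair P' {p₂ | ¬ q ≤ φ p₂} := by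
      intro p hp
      obtain ⟨p₂, hp₂, hnle⟩ := hcon p hp
      exact ⟨p₂, hnle, hp₂⟩
    obtain ⟨c, ⟨p₂, hp₂, rfl⟩, hqc⟩ := hφ _ hC q hq
    exact hp₂ hqc
  obtain ⟨p0, -⟩ := hP ∅ Set.finite_empty
  have hg' : ∀ q : Q, ∃ p, q ∈ Q' → p ∈ P' ∧ ∀ p₂, p ≤ p₂ → q ≤ φ p₂ := by
    intro q
    by_cases hq : q ∈ Q'
    · obtain ⟨p, hp⟩ := hg q hq
      exact ⟨p, fun _ => hp⟩
    · exact ⟨p0, fun h => absurd h hq⟩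
  intro S hSQ hScard
  choose g hgall using hg'
  have hgP : ∀ q : Q, q ∈ Q' → g q ∈ P' := fun q hq => (hgall q hq).1
  have hgprop : ∀ q : Q, q ∈ Q' → ∀ p₂, g q ≤ p₂ → q ≤ φ p₂ := fun q hq => (hgall q hq).2
  set A : Set P := g '' S with hA
  have hAP' : A ⊆ P' := by
    rintro _ ⟨q, hq, rfl⟩
    exact hgP q (hSQ hq)
  by_cases hcase : ∃ p, l ≤ #({q ∈ S | g q = p} : Set Q)
  · -- Case A : some fiber is large; it is bounded, take a subset of size l
    obtain ⟨p, hp⟩ := hcase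
    obtain ⟨T, hTsub, hTcard⟩ := Cardinal.le_mk_iff_exists_subset.mp hp
    refine ⟨T, fun q hq => (hTsub hq).1, hTcard, ?_⟩
    intro U hUT hUcard
    obtain ⟨V, hVU, hVcard⟩ := Cardinal.le_mk_iff_exists_subset.mp (hUcard ▸ hnm)
    refine ⟨V, hVU, hVcard, φ p, ?_⟩
    intro v hv
    have hvF := hTsub (hUT (hVU hv))
    exact hgprop v (hSQ hvF.1) p (le_of_eq hvF.2)
  · -- Case B : all fibers are small, hence the image A has size κ
    push_neg at hcase
    have hAcard : #A = κ := by
      refine le_antisymm (hScard ▸ Cardinal.mk_image_le) ?_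
      by_contra hlt
      push_neg at hlt
      have hsub : S ⊆ ⋃ p ∈ A, {q ∈ S | g q = p} := by
        intro q hq
        exact Set.mem_biUnion ⟨q, hq, rfl⟩ ⟨hq, rfl⟩
      have h1 : κ ≤ #A * ⨆ p : A, #({q ∈ S | g q = p.1} : Set Q) :=
        hScard ▸ (Cardinal.mk_le_mk_of_subset hsub).trans (Cardinal.mk_biUnion_le _ _)
      have h2 : (⨆ p : A, #({q ∈ S | g q = p.1} : Set Q)) < κ :=
        Cardinal.iSup_lt_of_isRegular hreg hlt fun p => lt_of_lt_of_le (hcase p.1) hlκ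
      exact absurd h1 (not_le_of_gt (Cardinal.mul_lt_of_lt hreg.aleph0_le hlt h2))
    obtain ⟨TP, hTPA, hTPcard, hTPprop⟩ := hcal A hAP' hAcard
    -- choose a section h of g over A
    obtain ⟨q0, -⟩ := hQ ∅ Set.finite_empty
    have hsec : ∀ p : P, ∃ q, p ∈ A → q ∈ S ∧ g q = p := by
      intro p
      by_cases hp : p ∈ A
      · obtain ⟨q, hq, rfl⟩ := hp
        exact ⟨q, fun _ => ⟨hq, rfl⟩⟩
      · exact ⟨q0, fun h => absurd h hp⟩
    choose h hsec using hsec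
    have hhS : ∀ p ∈ A, h p ∈ S := fun p hp => (hsec p hp).1
    have hgh : ∀ p ∈ A, g (h p) = p := fun p hp => (hsec p hp).2
    have hinj : ∀ s ⊆ A, Set.InjOn h s := fun s hs x hx y hy hxy => by
      rw [← hgh x (hs hx), ← hgh y (hs hy), hxy]
    refine ⟨h '' TP, ?_, ?_, ?_⟩
    · rintro _ ⟨p, hp, rfl⟩; exact hhS p (hTPA hp)
    · rw [Cardinal.mk_image_eq_of_injOn h TP (hinj TP hTPA)]; exact hTPcard
    · intro U hUT hUcard
      have hhgu : ∀ q ∈ U, h (g q) = q := by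
        intro q hq
        obtain ⟨p, hp, rfl⟩ := hUT hq
        rw [hgh p (hTPA hp)]
      have hginj : Set.InjOn g U := fun x hx y hy hxy => by
        rw [← hhgu x hx, ← hhgu y hy, hxy]
      have hUP : g '' U ⊆ TP := by
        rintro _ ⟨q, hq, rfl⟩
        obtain ⟨p, hp, rfl⟩ := hUT hq
        rwa [hgh p (hTPA hp)]
      obtain ⟨VP, hVPU, hVPcard, pstar, hpstar⟩ :=
        hTPprop (g '' U) hUP (by rw [Cardinal.mk_image_eq_of_injOn g U hginj]; exact hUcard)
      refine ⟨h '' VP, ?_, ?_, φ pstar, ?_⟩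
      · rintro _ ⟨p, hp, rfl⟩
        obtain ⟨q, hq, rfl⟩ := hVPU hp
        rwa [hhgu q hq]
      · rw [Cardinal.mk_image_eq_of_injOn h VP
          (hinj VP (fun p hp => hTPA (hUP (hVPU hp))))]
        exact hVPcard
      · rintro _ ⟨p, hp, rfl⟩
        have hpA : p ∈ A := hTPA (hUP (hVPU hp))
        exact hgprop (h p) (hSQ (hhS p hpA)) pstar (by rw [hgh p hpA]; exact hpstar hp)
end

section
/- Let Q be a topological directed set which is Hausdorff, DK (every down set ↓q = {q' ∈ Q : q' ≤ q} is compact), and has calibre (ω₁,ω). Then Q has countable extent: every closed discrete subset of Q is countable. -/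
/-! A closed discrete set meets every compact set in a finite set. In a DK directed set every
bounded set lies in a compact down set `Iic q`, so a closed discrete set has no infinite bounded
subset; by calibre `(ω₁,ω)` it cannot be uncountable. -/

open Cardinal Set

theorem IsClosed.finite_inter_of_isCompact {X : Type*} [TopologicalSpace X] {S K : Set X}
    (hS : IsClosed S) (hdisc : DiscreteTopology S) (hK : IsCompact K) : (S ∩ K).Finite :=
  (hK.inter_left hS).finite ((isDiscrete_iff_discreteTopology.mpr hdisc).mono inter_subset_left)

theorem BddAbove.finite_of_isClosed_of_discreteTopology {Q : Type*} [Preorder Q]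
    [TopologicalSpace Q] (hDK : ∀ q : Q, IsCompact (Iic q)) {S T : Set Q} (hS : IsClosed S)
    (hdisc : DiscreteTopology S) (hTS : T ⊆ S) (hT : BddAbove T) : T.Finite := by
  obtain ⟨q, hq⟩ := hT
  exact (hS.finite_inter_of_isCompact hdisc (hDK q)).subset fun t ht => ⟨hTS ht, hq ht⟩

theorem hausdorff_DK_calibre_countable_extent_general {Q : Type*}
    [PartialOrder Q] [TopologicalSpace Q]
    (hDK : ∀ q : Q, IsCompact (Set.Iic q))
    (hcal : CalibreO1O Q) :
    ∀ S : Set Q, IsClosed S → DiscreteTopology S → S.Countable := by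
  intro S hS hdisc
  by_contra hunc
  obtain ⟨T, hTS, hTinf, hTbdd⟩ := hcal S hunc
  exact hTinf (hTbdd.finite_of_isClosed_of_discreteTopology hDK hS hdisc hTS)

/-- a Hausdorff topological directed set in which every down set
is compact (DK) and which has calibre `(ω₁,ω)` has countable extent: every
closed discrete subset is countable. -/
theorem hausdorff_DK_calibre_countable_extent {Q : Type*}
    [PartialOrder Q] [TopologicalSpace Q] [T2Space Q]
    (hdir : ∀ F : Set Q, F.Finite → BddAbove F)
    (hDK : ∀ q : Q, IsCompact (Set.Iic q))
    (hcal : CalibreO1O Q) :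
    ∀ S : Set Q, IsClosed S → DiscreteTopology S → S.Countable :=
  hausdorff_DK_calibre_countable_extent_general hDK hcal
end

section
/- Let κ be a regular cardinal and κ ≥ λ ≥ μ ≥ ν. Let Q be a directed set with calibre (κ,λ), and let P be a directed set covered by a Q-ordered family {P_q : q ∈ Q} of subsets (i.e., P = ⋃_{q∈Q} P_q and P_q ⊆ P_{q'} whenever q ≤ q' in Q) such that each P_q has relative calibre (μ,ν) in P. Then P has calibre (κ,λ,μ,ν). -/
open Cardinal Set

/-- A directed set `P` has calibre `(κ,λ,μ,ν)` if every `κ`-sized subset of `P`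
has a `λ`-sized subset `T` such that every `μ`-sized subset of `T` has a
`ν`-sized subset bounded in `P`. -/
def Calibre (P : Type u) [Preorder P] (κ l m n : Cardinal.{u}) : Prop :=
  ∀ S : Set P, #S = κ → ∃ T ⊆ S, #T = l ∧
    ∀ U ⊆ T, #U = m → ∃ V ⊆ U, #V = n ∧ BddAbove V

/-!
Choose for every `p : P` an index `f p` with `p ∈ Pq (f p)`, and let `S ⊆ P` have size `κ`.
If `f '' S` has size `< κ`, regularity of `κ` makes some fibre of `f` on `S` of size `κ`, and that
fibre lies in a single `Pq q`. Otherwise the calibre of `Q` yields `λ` many values of `f` on `S`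
with a common upper bound `q`; by monotonicity their preimages in `S` all lie in `Pq q`. Either way
`S ∩ Pq q` has size at least `λ`, and any `λ`-sized subset of it inherits the relative calibre of
`Pq q`.
-/

theorem Cardinal.exists_le_mk_fiber_of_mk_image_lt {α β : Type u} {κ : Cardinal.{u}}
    (hκ : κ.IsRegular) (f : α → β) {S : Set α} (hS : #S = κ) (h : #(f '' S) < κ) :
    ∃ b, κ ≤ #({x ∈ S | f x = b} : Set α) := by
  obtain ⟨⟨b, _⟩, t, htS, hκt, hft⟩ := infinite_pigeonhole_set (imageFactorization f S) κ hS.ge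
    hκ.aleph0_le (hκ.cof_ord.symm ▸ h)
  exact ⟨b, hκt.trans (mk_le_mk_of_subset fun x hx => ⟨htS hx, congrArg Subtype.val (hft hx)⟩)⟩

theorem Calibre.exists_subset_bddAbove {Q : Type u} [Preorder Q] {κ l : Cardinal.{u}}
    (hQ : Calibre Q κ l l l) {A : Set Q} (hA : #A = κ) :
    ∃ V ⊆ A, #V = l ∧ BddAbove V := by
  obtain ⟨T, hTA, hTl, hT⟩ := hQ A hA
  obtain ⟨V, hVT, hVl, hV⟩ := hT T subset_rfl hTl
  exact ⟨V, hVT.trans hTA, hVl, hV⟩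

theorem Calibre.exists_le_mk_inter_of_iUnion_eq_univ {Q P : Type u} [Preorder Q]
    {κ l : Cardinal.{u}} (hκ : κ.IsRegular) (hlκ : l ≤ κ) (hQ : Calibre Q κ l l l)
    {Pq : Q → Set P} (hcover : ⋃ q, Pq q = Set.univ) (hmono : Monotone Pq)
    {S : Set P} (hS : #S = κ) :
    ∃ q, l ≤ #(S ∩ Pq q : Set P) := by
  choose f hf using fun p => mem_iUnion.1 (hcover ▸ mem_univ p : p ∈ ⋃ q, Pq q)
  rcases (mk_image_le.trans_eq hS : #(f '' S) ≤ κ).lt_or_eq with hsmall | hlarge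
  · obtain ⟨q, hq⟩ := exists_le_mk_fiber_of_mk_image_lt hκ f hS hsmall
    refine ⟨q, hlκ.trans (hq.trans (mk_le_mk_of_subset ?_))⟩
    rintro x ⟨hx, rfl⟩
    exact ⟨hx, hf x⟩
  · obtain ⟨V, hVS, rfl, q, hq⟩ := hQ.exists_subset_bddAbove hlarge
    refine ⟨q, (mk_subset_ge_of_subset_image f hVS).trans (mk_le_mk_of_subset ?_)⟩
    rintro x ⟨hx, hfx⟩
    exact ⟨hx, hmono (hq hfx) (hf x)⟩

theorem calibre_types_general {Q : Type u} {P : Type u} [PartialOrder Q] [PartialOrder P]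
    (κ l m n : Cardinal.{u}) (hreg : κ.IsRegular)
    (hlκ : l ≤ κ)
    (hQcal : Calibre Q κ l l l)
    (Pq : Q → Set P) (hcover : (⋃ q, Pq q) = Set.univ)
    (hmono : ∀ q q' : Q, q ≤ q' → Pq q ⊆ Pq q')
    (hrel : ∀ q : Q, ∀ U ⊆ Pq q, #U = m → ∃ V ⊆ U, #V = n ∧ BddAbove V) :
    Calibre P κ l m n := by
  intro S hS
  obtain ⟨q, hq⟩ := hQcal.exists_le_mk_inter_of_iUnion_eq_univ hreg hlκ hcover
    (fun _ _ h => hmono _ _ h) hS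
  obtain ⟨T, hTS, hTl⟩ := le_mk_iff_exists_subset.1 hq
  exact ⟨T, hTS.trans inter_subset_left, hTl,
    fun U hUT hUm => hrel q U (hUT.trans (hTS.trans inter_subset_right)) hUm⟩

/-- if `Q` has calibre `(κ,λ)`, `κ` regular, `κ ≥ λ ≥ μ ≥ ν`, and
`P` is covered by a `Q`-ordered family of subsets each of relative calibre
`(μ,ν)` in `P`, then `P` has calibre `(κ,λ,μ,ν)`. -/
theorem calibre_types {Q : Type u} {P : Type u} [PartialOrder Q] [PartialOrder P]
    (hQdir : ∀ F : Set Q, F.Finite → BddAbove F)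
    (hPdir : ∀ F : Set P, F.Finite → BddAbove F)
    (κ l m n : Cardinal.{u}) (hreg : κ.IsRegular)
    (hlκ : l ≤ κ) (hml : m ≤ l) (hnm : n ≤ m)
    (hQcal : Calibre Q κ l l l)
    (Pq : Q → Set P) (hcover : (⋃ q, Pq q) = Set.univ)
    (hmono : ∀ q q' : Q, q ≤ q' → Pq q ⊆ Pq q')
    (hrel : ∀ q : Q, ∀ U ⊆ Pq q, #U = m → ∃ V ⊆ U, #V = n ∧ BddAbove V) :
    Calibre P κ l m n :=
  calibre_types_general κ l m n hreg hlκ hQcal Pq hcover hmono hrel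
end

section
/- Let κ be an infinite regular cardinal. For each n < ω let P_n be a directed set and let Q_n ⊆ P_n have relative calibre (κ,κ,ω) in P_n (every κ-sized subset of Q_n contains a κ-sized subset S such that every infinite subset of S contains an infinite subset bounded in P_n). Then the product ∏_n Q_n has relative calibre (κ,ω) in ∏_n P_n (with the coordinatewise order): every κ-sized subset of ∏_n Q_n contains an infinite subset bounded in ∏_n P_n. In particular, if each P_n has calibre (κ,κ,ω), then ∏_n P_n has calibre (κ,ω). -/
open Cardinal Set

universe u

-- pigeonhole for regular cardinals
lemma pigeon_reg {α β : Type u} {κ : Cardinal.{u}} (hreg : κ.IsRegular)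
    (g : α → β) (C : Set α) (hC : #C = κ) (hI : #(g '' C) < κ) :
    ∃ y, #(C ∩ g ⁻¹' {y} : Set α) = κ := by
  by_contra h
  push_neg at h
  have hlt : ∀ y, #(C ∩ g ⁻¹' {y} : Set α) < κ := by
    intro y
    exact lt_of_le_of_ne (hC ▸ Cardinal.mk_le_mk_of_subset inter_subset_left) (h y)
  have hcover : C ⊆ ⋃ y ∈ g '' C, (C ∩ g ⁻¹' {y}) := by
    intro x hx
    exact mem_biUnion (mem_image_of_mem g hx) ⟨hx, rfl⟩
  have h1 : #C ≤ #(⋃ y ∈ g '' C, (C ∩ g ⁻¹' {y}) : Set α) :=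
    Cardinal.mk_le_mk_of_subset hcover
  have h2 : #(⋃ y ∈ g '' C, (C ∩ g ⁻¹' {y}) : Set α) ≤
      #(g '' C) * ⨆ y : (g '' C), #(C ∩ g ⁻¹' {y.1} : Set α) :=
    Cardinal.mk_biUnion_le _ _
  have h3 : (⨆ y : (g '' C), #(C ∩ g ⁻¹' {y.1} : Set α)) < κ :=
    Cardinal.iSup_lt_of_isRegular hreg hI (fun y => hlt y.1)
  have h4 : #(g '' C) * (⨆ y : (g '' C), #(C ∩ g ⁻¹' {y.1} : Set α)) < κ :=
    Cardinal.mul_lt_of_lt hreg.aleph0_le hI h3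
  rw [hC] at h1
  exact h4.not_ge (h1.trans h2)

lemma pigeon_fin {α β : Type*} (g : α → β) (C : Set α) (hC : C.Infinite)
    (hW : (g '' C).Finite) : ∃ y, (C ∩ g ⁻¹' {y}).Infinite := by
  by_contra h
  push_neg at h
  have : C ⊆ ⋃ y ∈ g '' C, (C ∩ g ⁻¹' {y}) := by
    intro x hx; exact mem_biUnion (mem_image_of_mem g hx) ⟨hx, rfl⟩
  exact hC ((hW.biUnion (fun y _ => h y)).subset this)

lemma relcal_main {P : ℕ → Type u}
    [∀ k, PartialOrder (P k)]
    (hdir : ∀ k, ∀ F : Set (P k), F.Finite → BddAbove F)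
    (κ : Cardinal.{u}) (hreg : κ.IsRegular)
    (Q : ∀ k, Set (P k))
    (hrel : ∀ k, ∀ S ⊆ Q k, #S = κ → ∃ T ⊆ S, #T = κ ∧
      ∀ U ⊆ T, U.Infinite → ∃ V ⊆ U, V.Infinite ∧ BddAbove V)
    (S : Set (∀ k, P k)) (hSQ : S ⊆ {f | ∀ k, f k ∈ Q k}) (hS : #S = κ) :
    ∃ T ⊆ S, T.Infinite ∧ BddAbove T := by
  classical
  -- Step A: refine in each coordinate
  have stepA : ∀ (n : ℕ) (C : Set (∀ k, P k)), C ⊆ S → #C = κ →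
      ∃ C', C' ⊆ C ∧ #C' = κ ∧ ∃ T : Set (P n), (∀ f ∈ C', f n ∈ T) ∧
        (∀ U ⊆ T, U.Infinite → ∃ V ⊆ U, V.Infinite ∧ BddAbove V) := by
    intro n C hCS hC
    set g : (∀ k, P k) → P n := fun f => f n with hg
    by_cases hI : #(g '' C) = κ
    · have hIQ : g '' C ⊆ Q n := by
        rintro _ ⟨f, hf, rfl⟩
        exact hSQ (hCS hf) n
      obtain ⟨T, hTI, hTκ, hTgood⟩ := hrel n (g '' C) hIQ hI
      refine ⟨C ∩ g ⁻¹' T, inter_subset_left, ?_, T, fun f hf => hf.2, hTgood⟩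
      apply le_antisymm (hC ▸ Cardinal.mk_le_mk_of_subset inter_subset_left)
      have hsub : T ⊆ g '' (C ∩ g ⁻¹' T) := by
        intro t ht
        obtain ⟨f, hf, rfl⟩ := hTI ht
        exact ⟨f, ⟨hf, ht⟩, rfl⟩
      calc κ = #T := hTκ.symm
        _ ≤ #(g '' (C ∩ g ⁻¹' T)) := Cardinal.mk_le_mk_of_subset hsub
        _ ≤ #(C ∩ g ⁻¹' T : Set (∀ k, P k)) := Cardinal.mk_image_le
    · have hIlt : #(g '' C) < κ :=
        lt_of_le_of_ne (hC ▸ Cardinal.mk_image_le) hI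
      obtain ⟨y, hy⟩ := pigeon_reg hreg g C hC hIlt
      refine ⟨C ∩ g ⁻¹' {y}, inter_subset_left, hy, {y}, fun f hf => hf.2, ?_⟩
      intro U hU hUinf
      exact (hUinf ((Set.finite_singleton y).subset hU)).elim
  -- Step A': the nested sequence of κ-sized sets
  let Drec : ℕ → {C : Set (∀ k, P k) // C ⊆ S ∧ #C = κ} := fun n =>
    Nat.rec ⟨S, Subset.rfl, hS⟩
      (fun n p =>
        ⟨(stepA n p.1 p.2.1 p.2.2).choose,
         (stepA n p.1 p.2.1 p.2.2).choose_spec.1.trans p.2.1,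
         (stepA n p.1 p.2.1 p.2.2).choose_spec.2.1⟩) n
  set D : ℕ → Set (∀ k, P k) := fun n => (Drec n).1 with hD
  have hD0 : D 0 = S := rfl
  have hDS : ∀ n, D n ⊆ S := fun n => (Drec n).2.1
  have hDκ : ∀ n, #(D n) = κ := fun n => (Drec n).2.2
  have hDstep : ∀ n, D (n + 1) ⊆ D n := fun n =>
    (stepA n (Drec n).1 (Drec n).2.1 (Drec n).2.2).choose_spec.1
  have hTex : ∀ n, ∃ T : Set (P n), (∀ f ∈ D (n + 1), f n ∈ T) ∧
      (∀ U ⊆ T, U.Infinite → ∃ V ⊆ U, V.Infinite ∧ BddAbove V) := fun n =>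
    (stepA n (Drec n).1 (Drec n).2.1 (Drec n).2.2).choose_spec.2.2
  choose T hT1 hT2 using hTex
  have hDanti : ∀ m n, m ≤ n → D n ⊆ D m := by
    intro m n h
    induction n with
    | zero => cases Nat.le_zero.mp h; exact Subset.rfl
    | succ n ih =>
      rcases Nat.lt_or_ge m (n+1) with h' | h'
      · exact (hDstep n).trans (ih (Nat.lt_succ_iff.mp h'))
      · have : m = n + 1 := le_antisymm h h'
        subst this; exact Subset.rfl
  have hDinf : ∀ n, (D n).Infinite := by
    intro n
    rw [← Set.infinite_coe_iff]
    rw [← Cardinal.aleph0_le_mk_iff, hDκ n]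
    exact hreg.aleph0_le
  -- Step B: choose a fresh point f n ∈ D (n+1)
  have stepB : ∀ (n : ℕ) (s : Set (∀ k, P k)), s.Finite →
      ∃ x, x ∈ D n ∧ x ∉ s := by
    intro n s hs
    obtain ⟨x, hx⟩ := ((hDinf n).diff hs).nonempty
    exact ⟨x, hx.1, hx.2⟩
  let Frec : ℕ → (∀ k, P k) × {s : Set (∀ k, P k) // s.Finite} := fun n =>
    Nat.rec
      ⟨(stepB 1 ∅ finite_empty).choose,
       ⟨{(stepB 1 ∅ finite_empty).choose}, finite_singleton _⟩⟩
      (fun n p =>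
        ⟨(stepB (n + 2) p.2.1 p.2.2).choose,
         ⟨insert (stepB (n + 2) p.2.1 p.2.2).choose p.2.1, p.2.2.insert _⟩⟩) n
  set f : ℕ → ∀ k, P k := fun n => (Frec n).1 with hfdef
  set G : ℕ → Set (∀ k, P k) := fun n => (Frec n).2.1 with hGdef
  have hf : ∀ n, f n ∈ D (n + 1) := by
    intro n
    cases n with
    | zero => exact (stepB 1 ∅ finite_empty).choose_spec.1
    | succ n => exact (stepB (n + 2) (Frec n).2.1 (Frec n).2.2).choose_spec.1
  have hGsucc : ∀ n, G (n + 1) = insert (f (n + 1)) (G n) := fun n => rfl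
  have hGf : ∀ n, f n ∈ G n := by
    intro n
    cases n with
    | zero => exact mem_singleton _
    | succ n => exact mem_insert _ _
  have hfree : ∀ n, f (n + 1) ∉ G n := fun n =>
    (stepB (n + 2) (Frec n).2.1 (Frec n).2.2).choose_spec.2
  have hGmono : ∀ m n, m ≤ n → G m ⊆ G n := by
    intro m n h
    induction n with
    | zero => cases Nat.le_zero.mp h; exact Subset.rfl
    | succ n ih =>
      rcases Nat.lt_or_ge m (n+1) with h' | h'
      · exact (ih (Nat.lt_succ_iff.mp h')).trans (by rw [hGsucc]; exact subset_insert _ _)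
      · have : m = n + 1 := le_antisymm h h'
        subst this; exact Subset.rfl
  have hne : ∀ m n, m < n → f m ≠ f n := by
    intro m n hmn heq
    obtain ⟨j, rfl⟩ := Nat.exists_eq_add_of_lt hmn
    have h1 : f m ∈ G (m + j) := hGmono m (m + j) (Nat.le_add_right _ _) (hGf m)
    rw [heq] at h1
    exact hfree (m + j) h1
  have hinj : Function.Injective f := by
    intro m n heq
    by_contra hne'
    rcases Nat.lt_or_ge m n with h | h
    · exact hne m n h heq
    · exact hne n m (lt_of_le_of_ne h (Ne.symm hne')) heq.symm
  -- Step C: fusion on index sets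
  have stepC : ∀ (k : ℕ) (M : Set ℕ), M.Infinite →
      ∃ M', M' ⊆ M ∧ M'.Infinite ∧ BddAbove ((fun n => f n k) '' M') := by
    intro k M hM
    set M₀ : Set ℕ := M \ Iio k with hM₀
    have hM₀inf : M₀.Infinite := hM.diff (Set.finite_Iio k)
    have hM₀k : ∀ n ∈ M₀, k ≤ n := fun n hn => Nat.le_of_not_lt hn.2
    set g : ℕ → P k := fun n => f n k with hgk
    have hWT : g '' M₀ ⊆ T k := by
      rintro _ ⟨n, hn, rfl⟩
      have : f n ∈ D (k + 1) :=
        hDanti (k + 1) (n + 1) (Nat.succ_le_succ (hM₀k n hn)) (hf n)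
      exact hT1 k (f n) this
    by_cases hW : (g '' M₀).Finite
    · obtain ⟨y, hy⟩ := pigeon_fin g M₀ hM₀inf hW
      refine ⟨M₀ ∩ g ⁻¹' {y}, (inter_subset_left).trans diff_subset, hy, ?_⟩
      apply BddAbove.mono _ (bddAbove_singleton (a := y))
      rintro _ ⟨n, hn, rfl⟩
      exact hn.2
    · obtain ⟨V, hVW, hVinf, hVbdd⟩ :=
        hT2 k (g '' M₀) hWT hW
      refine ⟨M₀ ∩ g ⁻¹' V, (inter_subset_left).trans diff_subset, ?_, ?_⟩
      · have hsub : V ⊆ g '' (M₀ ∩ g ⁻¹' V) := by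
          intro v hv
          obtain ⟨n, hn, rfl⟩ := hVW hv
          exact ⟨n, ⟨hn, hv⟩, rfl⟩
        have : (g '' (M₀ ∩ g ⁻¹' V)).Infinite := hVinf.mono hsub
        exact this.of_image g
      · apply hVbdd.mono
        rintro _ ⟨n, hn, rfl⟩
        exact hn.2
  let Mrec : ℕ → {A : Set ℕ // A.Infinite} := fun k =>
    Nat.rec ⟨Set.univ, Set.infinite_univ⟩
      (fun k p =>
        ⟨(stepC k p.1 p.2).choose, (stepC k p.1 p.2).choose_spec.2.1⟩) k
  set M : ℕ → Set ℕ := fun k => (Mrec k).1 with hMdef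
  have hMinf : ∀ k, (M k).Infinite := fun k => (Mrec k).2
  have hMstep : ∀ k, M (k + 1) ⊆ M k := fun k =>
    (stepC k (Mrec k).1 (Mrec k).2).choose_spec.1
  have hMbdd : ∀ k, BddAbove ((fun n => f n k) '' M (k + 1)) := fun k =>
    (stepC k (Mrec k).1 (Mrec k).2).choose_spec.2.2
  have hManti : ∀ j k, j ≤ k → M k ⊆ M j := by
    intro j k h
    induction k with
    | zero => cases Nat.le_zero.mp h; exact Subset.rfl
    | succ k ih =>
      rcases Nat.lt_or_ge j (k+1) with h' | h'
      · exact (hMstep k).trans (ih (Nat.lt_succ_iff.mp h'))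
      · have : j = k + 1 := le_antisymm h h'
        subst this; exact Subset.rfl
  -- choose strictly increasing indices
  have stepN : ∀ (k a : ℕ), ∃ b, b ∈ M k ∧ a < b := by
    intro k a
    obtain ⟨b, hb, hab⟩ := (hMinf k).exists_gt a
    exact ⟨b, hb, hab⟩
  let nrec : ℕ → ℕ := fun j =>
    Nat.rec (stepN 1 0).choose (fun j a => (stepN (j + 2) a).choose) j
  have hnmem : ∀ j, nrec j ∈ M (j + 1) := by
    intro j
    cases j with
    | zero => exact (stepN 1 0).choose_spec.1
    | succ j => exact (stepN (j + 2) (nrec j)).choose_spec.1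
  have hnlt : ∀ j, nrec j < nrec (j + 1) := fun j =>
    (stepN (j + 2) (nrec j)).choose_spec.2
  have hnmono : StrictMono nrec := strictMono_nat_of_lt_succ hnlt
  -- the final set
  refine ⟨Set.range (fun j => f (nrec j)), ?_, ?_, ?_⟩
  · rintro _ ⟨j, rfl⟩
    exact hDS (nrec j + 1) (hf (nrec j))
  · exact Set.infinite_range_of_injective (hinj.comp hnmono.injective)
  · have hcoord : ∀ k, ∃ c : P k, ∀ j, f (nrec j) k ≤ c := by
      intro k
      obtain ⟨b1, hb1⟩ := hMbdd k
      have hBfin : ((fun j => f (nrec j) k) '' (Set.Iio k)).Finite :=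
        (Set.finite_Iio k).image _
      obtain ⟨b2, hb2⟩ := hdir k _ hBfin
      obtain ⟨c, hc⟩ := hdir k {b1, b2} ((finite_singleton b2).insert b1)
      refine ⟨c, fun j => ?_⟩
      rcases Nat.lt_or_ge j k with h | h
      · exact le_trans (hb2 ⟨j, h, rfl⟩) (hc (mem_insert_of_mem _ rfl))
      · have : nrec j ∈ M (k + 1) :=
          hManti (k + 1) (j + 1) (Nat.succ_le_succ h) (hnmem j)
        exact le_trans (hb1 ⟨nrec j, this, rfl⟩) (hc (mem_insert _ _))
    choose c hc using hcoord
    refine ⟨c, ?_⟩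
    rintro _ ⟨j, rfl⟩
    intro k
    exact hc k j

/-- if `κ` is an infinite regular cardinal and each `Q_n ⊆ P_n`
has relative calibre `(κ,κ,ω)` in the directed set `P_n`, then `∏_n Q_n` has
relative calibre `(κ,ω)` in `∏_n P_n`; in particular if each `P_n` has calibre
`(κ,κ,ω)` then `∏_n P_n` has calibre `(κ,ω)`. -/
theorem countable_product_relative_calibre {P : ℕ → Type u}
    [∀ k, PartialOrder (P k)]
    (hdir : ∀ k, ∀ F : Set (P k), F.Finite → BddAbove F)
    (κ : Cardinal.{u}) (hreg : κ.IsRegular)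
    (Q : ∀ k, Set (P k))
    (hrel : ∀ k, ∀ S ⊆ Q k, #S = κ → ∃ T ⊆ S, #T = κ ∧
      ∀ U ⊆ T, U.Infinite → ∃ V ⊆ U, V.Infinite ∧ BddAbove V) :
    (∀ S : Set (∀ k, P k), S ⊆ {f | ∀ k, f k ∈ Q k} → #S = κ →
      ∃ T ⊆ S, T.Infinite ∧ BddAbove T) ∧
    ((∀ k, ∀ S : Set (P k), #S = κ → ∃ T ⊆ S, #T = κ ∧
        ∀ U ⊆ T, U.Infinite → ∃ V ⊆ U, V.Infinite ∧ BddAbove V) →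
      ∀ S : Set (∀ k, P k), #S = κ → ∃ T ⊆ S, T.Infinite ∧ BddAbove T) := by
  constructor
  · exact fun S hSQ hS => relcal_main hdir κ hreg Q hrel S hSQ hS
  · intro h S hS
    exact relcal_main hdir κ hreg (fun k => Set.univ)
      (fun k S' _ hS' => h k S' hS') S (fun f _ k => Set.mem_univ _) hS
end

section
/- Let P be a directed set. If P has calibre ω₁ (every uncountable subset of P contains an uncountable bounded subset) or P has calibre ω (every countable subset of P is bounded), then the countable power P^ω, with the coordinatewise order, has calibre (ω₁,ω). In other words, calibre ω₁ and calibre ω each imply powerfully calibre (ω₁,ω). -/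
/-!
Calibre `ω`: a countably infinite subset of an uncountable set is bounded coordinatewise.

Calibre `ω₁`: shrink an uncountable `S ⊆ P^ω` to uncountable sets `S = A₀ ⊇ A₁ ⊇ ⋯` such that
the `n`-th coordinates of `Aₙ₊₁` are bounded and `xₙ ∈ Aₙ \ Aₙ₊₁`. The `xₙ` are distinct,
and in coordinate `n` all but the finitely many `x₀, …, xₙ` lie in `Aₙ₊₁`, so `{xₙ}` is bounded.
-/

open Cardinal Set

def CalibreOmega1 (P : Type*) [Preorder P] : Prop :=
  ∀ S : Set P, ¬ S.Countable → ∃ T ⊆ S, ¬ T.Countable ∧ BddAbove T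

def CalibreOmega (P : Type*) [Preorder P] : Prop :=
  ∀ S : Set P, S.Countable → BddAbove S

section Calibre

variable {P : Type*} [Preorder P]

theorem CalibreOmega.pi {ι : Type*} (hP : CalibreOmega P) : CalibreOmega (ι → P) :=
  fun _ hS => bddAbove_pi.2 fun _ => hP _ (hS.image _)

theorem CalibreOmega.calibreO1O (hP : CalibreOmega P) : CalibreO1O P := by
  intro S hS
  obtain ⟨T, hTS, hT, hTinf⟩ :=
    Infinite.exists_subset_countable_infinite fun hfin => hS hfin.countable
  exact ⟨T, hTS, hTinf, hP T hT⟩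

theorem isDirected_of_forall_finite_bddAbove (hdir : ∀ F : Set P, F.Finite → BddAbove F) :
    IsDirected P (· ≤ ·) :=
  ⟨fun a b => by
    obtain ⟨c, hc⟩ := hdir {a, b} (toFinite _)
    exact ⟨c, hc (mem_insert a _), hc (mem_insert_of_mem a rfl)⟩⟩

theorem CalibreOmega1.exists_not_countable_bddAbove_image {α : Type*} (hP : CalibreOmega1 P)
    (φ : α → P) {A : Set α} (hA : ¬ A.Countable) :
    ∃ B ⊆ A, ¬ B.Countable ∧ BddAbove (φ '' B) := by
  by_cases himg : (φ '' A).Countable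
  · have hfiber : ∃ p ∈ φ '' A, ¬ {a ∈ A | φ a = p}.Countable := by
      by_contra! hall
      refine hA ((himg.biUnion hall).mono fun a ha => ?_)
      exact mem_biUnion (mem_image_of_mem φ ha) ⟨ha, rfl⟩
    obtain ⟨p, -, hp⟩ := hfiber
    refine ⟨_, sep_subset _ _, hp, p, ?_⟩
    rintro _ ⟨a, ha, rfl⟩
    exact ha.2.le
  · obtain ⟨T, hTA, hT, hTbdd⟩ := hP _ himg
    refine ⟨{a ∈ A | φ a ∈ T}, sep_subset _ _, fun hc => hT ((hc.image φ).mono ?_), ?_⟩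
    · intro t ht
      obtain ⟨a, ha, rfl⟩ := hTA ht
      exact ⟨a, ⟨ha, ht⟩, rfl⟩
    · exact hTbdd.mono (image_subset_iff.2 fun _ ha => ha.2)

theorem CalibreOmega1.exists_nested_seq {α : Type*} (hP : CalibreOmega1 P) (φ : ℕ → α → P)
    {S : Set α} (hS : ¬ S.Countable) :
    ∃ (A : ℕ → Set α) (x : ℕ → α), A 0 = S ∧ (∀ n, A (n + 1) ⊆ A n) ∧
      (∀ n, x n ∈ A n \ A (n + 1)) ∧ ∀ n, BddAbove (φ n '' A (n + 1)) := by
  have step : ∀ (A : {A : Set α // ¬ A.Countable}) (n : ℕ),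
      ∃ B : {B : Set α // ¬ B.Countable}, ∃ x ∈ A.1, B.1 ⊆ A.1 \ {x} ∧ BddAbove (φ n '' B.1) := by
    rintro ⟨A, hA⟩ n
    obtain ⟨x, hx⟩ : A.Nonempty := nonempty_iff_ne_empty.2 fun h => hA (h ▸ countable_empty)
    have hAx : ¬ (A \ {x}).Countable := fun hc =>
      hA ((hc.insert x).mono (subset_insert_sdiff_singleton x A))
    obtain ⟨B, hBA, hB, hBbdd⟩ := hP.exists_not_countable_bddAbove_image (φ n) hAx
    exact ⟨⟨B, hB⟩, x, hx, hBA, hBbdd⟩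
  choose next x hx hsub hbdd using step
  let A : ℕ → {A : Set α // ¬ A.Countable} := fun n => Nat.rec ⟨S, hS⟩ (fun n A => next A n) n
  exact ⟨fun n => (A n).1, fun n => x (A n) n, rfl, fun n => (hsub _ _).trans sdiff_subset,
    fun n => ⟨hx _ _, fun h => (hsub _ _ h).2 rfl⟩, fun n => hbdd _ _⟩

theorem CalibreOmega1.calibreO1O_pi [IsDirected P (· ≤ ·)] (hP : CalibreOmega1 P) :
    CalibreO1O (ℕ → P) := by
  intro S hS
  obtain ⟨A, x, hA0, hAsucc, hx, hbdd⟩ := hP.exists_nested_seq (fun n f => f n) hS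
  have hanti : Antitone A := antitone_nat_of_succ_le hAsucc
  have hinj : Function.Injective x := .of_lt_imp_ne fun k n hkn hxkn =>
    (hx k).2 (hxkn ▸ hanti hkn (hx n).1)
  refine ⟨range x, range_subset_iff.2 fun n => hA0 ▸ hanti n.zero_le (hx n).1,
    infinite_range_of_injective hinj, bddAbove_range_pi.2 fun n => ?_⟩
  have : Nonempty P := ⟨x 0 0⟩
  refine (((finite_Iic n).image fun k => x k n).bddAbove.union (hbdd n)).mono ?_
  rintro _ ⟨k, rfl⟩
  rcases le_or_gt k n with hkn | hnk
  · exact Or.inl ⟨k, hkn, rfl⟩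
  · exact Or.inr ⟨x k, hanti hnk (hx k).1, rfl⟩

end Calibre

/-- calibre `ω₁` (every uncountable subset has an uncountable
bounded subset) and calibre `ω` (every countable subset is bounded) each imply
that the countable power has calibre `(ω₁,ω)`. -/
theorem calibre_omega1_or_omega_powerfully {P : Type*} [PartialOrder P]
    (hdir : ∀ F : Set P, F.Finite → BddAbove F)
    (h : (∀ S : Set P, ¬ S.Countable → ∃ T ⊆ S, ¬ T.Countable ∧ BddAbove T) ∨
         (∀ S : Set P, S.Countable → BddAbove S)) :
    CalibreO1O (ℕ → P) := by
  have := isDirected_of_forall_finite_bddAbove hdir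
  rcases h with h | h
  · exact CalibreOmega1.calibreO1O_pi h
  · exact (CalibreOmega.pi h).calibreO1O
end

section
/- Let P be a directed set with calibre (ω₁,ω₁,ω,ω): every uncountable subset of P contains an uncountable subset S such that every infinite subset of S contains an infinite subset bounded in P. Then P is productively calibre (ω₁,ω): for every directed set Q with calibre (ω₁,ω), the product P × Q with the coordinatewise order has calibre (ω₁,ω). -/
open Cardinal Set

/-!
Let `S ⊆ P × Q` be uncountable. If some fibre `{p} × Q` meets `S` uncountably, calibre
`(ω₁,ω)` of `Q` finds the bounded infinite subset inside that fibre. Otherwise the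
projection of `S` to `P` is uncountable; choose `g` with `(p, g p) ∈ S` over an uncountable
`T ⊆ P` witnessing calibre `(ω₁,ω₁,ω,ω)`. Calibre `(ω₁,ω)` of `Q` gives an infinite `U ⊆ T`
on which `g` is bounded, and the choice of `T` an infinite bounded `V ⊆ U`; the graph of `g`
over `V` is then infinite and bounded in `P × Q`.
-/

theorem Set.exists_not_countable_inter_preimage_singleton {α β : Type*} {f : α → β}
    {s : Set α} (hs : ¬ s.Countable) (hf : (f '' s).Countable) :
    ∃ b, ¬ (s ∩ f ⁻¹' {b}).Countable := by
  by_contra! h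
  refine hs ((hf.biUnion fun b _ => h b).mono fun a ha => ?_)
  exact mem_biUnion (mem_image_of_mem f ha) ⟨ha, rfl⟩

theorem CalibreO1O.exists_infinite_bddAbove_image {α Q : Type*} [Preorder Q]
    (hQ : CalibreO1O Q) (g : α → Q) {T : Set α} (hT : ¬ T.Countable) :
    ∃ U ⊆ T, U.Infinite ∧ BddAbove (g '' U) := by
  by_cases hg : (g '' T).Countable
  · obtain ⟨b, hb⟩ := exists_not_countable_inter_preimage_singleton hT hg
    refine ⟨T ∩ g ⁻¹' {b}, inter_subset_left, mt Finite.countable hb, ?_⟩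
    exact bddAbove_singleton.mono (image_subset_iff.2 inter_subset_right)
  · obtain ⟨T', hT'T, hT'inf, hT'bdd⟩ := hQ _ hg
    have himage : g '' (T ∩ g ⁻¹' T') = T' := by
      rw [image_inter_preimage, inter_eq_right.2 hT'T]
    refine ⟨T ∩ g ⁻¹' T', inter_subset_left, Infinite.of_image g ?_, ?_⟩ <;> rw [himage]
    exacts [hT'inf, hT'bdd]

section Product

variable {P Q : Type*} [Preorder P] [Preorder Q]

theorem exists_infinite_bddAbove_subset_of_countable_image_fst (hQ : CalibreO1O Q)
    {S : Set (P × Q)} (hS : ¬ S.Countable) (hfst : (Prod.fst '' S).Countable) :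
    ∃ T ⊆ S, T.Infinite ∧ BddAbove T := by
  obtain ⟨p, hp⟩ := exists_not_countable_inter_preimage_singleton hS hfst
  obtain ⟨U, hUS, hUinf, hUbdd⟩ := hQ.exists_infinite_bddAbove_image Prod.snd hp
  refine ⟨U, hUS.trans inter_subset_left, hUinf, bddAbove_prod.2 ⟨?_, hUbdd⟩⟩
  exact bddAbove_singleton.mono (image_subset_iff.2 (hUS.trans inter_subset_right))

theorem exists_infinite_bddAbove_subset_of_not_countable_image_fst
    (hP : ∀ S : Set P, ¬ S.Countable → ∃ T ⊆ S, ¬ T.Countable ∧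
      ∀ U ⊆ T, U.Infinite → ∃ V ⊆ U, V.Infinite ∧ BddAbove V)
    (hQ : CalibreO1O Q) {S : Set (P × Q)} (hfst : ¬ (Prod.fst '' S).Countable) :
    ∃ T ⊆ S, T.Infinite ∧ BddAbove T := by
  obtain ⟨T, hTS, hTunc, hT⟩ := hP _ hfst
  have hsection : ∀ p ∈ T, ∃ q, (p, q) ∈ S := by
    rintro p hp
    obtain ⟨⟨p, q⟩, hpq, rfl⟩ := hTS hp
    exact ⟨q, hpq⟩
  obtain ⟨p₀, hp₀⟩ := Set.Infinite.nonempty (mt Finite.countable hTunc)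
  have : Nonempty Q := ⟨(hsection p₀ hp₀).choose⟩
  choose! g hgS using hsection
  obtain ⟨U, hUT, hUinf, hgU⟩ := hQ.exists_infinite_bddAbove_image g hTunc
  obtain ⟨V, hVU, hVinf, hVbdd⟩ := hT U hUT hUinf
  refine ⟨(fun p => (p, g p)) '' V, ?_, ?_, ?_⟩
  · rintro _ ⟨p, hp, rfl⟩
    exact hgS p (hUT (hVU hp))
  · exact hVinf.image fun a _ b _ h => congrArg Prod.fst h
  · rw [bddAbove_prod, image_image, image_image, image_id']
    exact ⟨hVbdd, hgU.mono (image_mono hVU)⟩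

end Product

theorem calibre_om1om1omom_productive_general {P : Type u} [PartialOrder P]
    (hcal : ∀ S : Set P, ¬ S.Countable → ∃ T ⊆ S, ¬ T.Countable ∧
      ∀ U ⊆ T, U.Infinite → ∃ V ⊆ U, V.Infinite ∧ BddAbove V) :
    ∀ (Q : Type v) [PartialOrder Q],
      (∀ F : Set Q, F.Finite → BddAbove F) →
      CalibreO1O Q → CalibreO1O (P × Q) := by
  intro Q _ _ hQ S hS
  by_cases hfst : (Prod.fst '' S).Countable
  · exact exists_infinite_bddAbove_subset_of_countable_image_fst hQ hS hfst
  · exact exists_infinite_bddAbove_subset_of_not_countable_image_fst hcal hQ hfst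

/-- a directed set with calibre `(ω₁,ω₁,ω,ω)` is productively
calibre `(ω₁,ω)`: its product with any calibre `(ω₁,ω)` directed set again has
calibre `(ω₁,ω)`. -/
theorem calibre_om1om1omom_productive {P : Type u} [PartialOrder P]
    (hPdir : ∀ F : Set P, F.Finite → BddAbove F)
    (hcal : ∀ S : Set P, ¬ S.Countable → ∃ T ⊆ S, ¬ T.Countable ∧
      ∀ U ⊆ T, U.Infinite → ∃ V ⊆ U, V.Infinite ∧ BddAbove V) :
    ∀ (Q : Type v) [PartialOrder Q],
      (∀ F : Set Q, F.Finite → BddAbove F) →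
      CalibreO1O Q → CalibreO1O (P × Q) :=
  calibre_om1om1omom_productive_general hcal
end

section
/- Let P be a directed set such that P = ⋃_{n<ω} P_n where each P_n has relative calibre ω in P (every countable subset of P_n is bounded in P). Then P is productively calibre (ω₁,ω): for every directed set Q with calibre (ω₁,ω), the product P × Q with the coordinatewise order has calibre (ω₁,ω). -/
/-!
Split an uncountable `S ⊆ P × Q` along the cover: some piece `S ∩ (Pₙ × Q)` is uncountable.
Calibre `(ω₁,ω)` of `Q`, applied to its second projection (or, if that projection is countable,
an uncountable fibre), yields an infinite subset with bounded second coordinates; a countably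
infinite part of it has first coordinates in a countable subset of `Pₙ`, bounded by hypothesis.
-/

open Cardinal Set

theorem exists_not_countable_inter_preimage {ι α β : Type*} [Countable ι] {C : ι → Set β}
    (hC : ⋃ i, C i = Set.univ) (f : α → β) {S : Set α} (hS : ¬ S.Countable) :
    ∃ i, ¬ (S ∩ f ⁻¹' C i).Countable := by
  by_contra! h
  refine hS ((countable_iUnion h).mono fun a ha => ?_)
  obtain ⟨i, hi⟩ := mem_iUnion.1 (hC.symm ▸ mem_univ (f a))
  exact mem_iUnion.2 ⟨i, ha, hi⟩

theorem CalibreO1O.exists_infinite_subset_bddAbove_image {α Q : Type*} [Preorder Q]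
    (hQ : CalibreO1O Q) (f : α → Q) {A : Set α} (hA : ¬ A.Countable) :
    ∃ T ⊆ A, T.Infinite ∧ BddAbove (f '' T) := by
  by_cases himg : (f '' A).Countable
  · obtain ⟨q, -, hq⟩ : ∃ q ∈ f '' A, ¬ (A ∩ f ⁻¹' {q}).Countable := by
      by_contra! h
      exact hA <| (himg.biUnion h).mono fun a ha =>
        mem_biUnion (mem_image_of_mem f ha) (show a ∈ A ∩ f ⁻¹' {f a} from ⟨ha, rfl⟩)
    exact ⟨A ∩ f ⁻¹' {q}, inter_subset_left, fun hfin => hq hfin.countable,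
      bddAbove_singleton.mono (image_subset_iff.2 inter_subset_right)⟩
  · obtain ⟨T, hTA, hT, hTbdd⟩ := hQ _ himg
    have hfT : f '' (A ∩ f ⁻¹' T) = T := by rw [image_inter_preimage, inter_eq_right.2 hTA]
    exact ⟨A ∩ f ⁻¹' T, inter_subset_left, Infinite.of_image f (hfT.symm ▸ hT),
      hfT.symm ▸ hTbdd⟩

theorem sigma_relative_calibre_omega_productive_general {P : Type u} [PartialOrder P]
    (Pn : ℕ → Set P) (hcover : (⋃ k, Pn k) = Set.univ)
    (hrel : ∀ k, ∀ S ⊆ Pn k, S.Countable → BddAbove S) :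
    ∀ (Q : Type v) [PartialOrder Q],
      (∀ F : Set Q, F.Finite → BddAbove F) →
      CalibreO1O Q → CalibreO1O (P × Q) := by
  intro Q _ _ hQ S hS
  obtain ⟨n, hn⟩ := exists_not_countable_inter_preimage hcover Prod.fst hS
  obtain ⟨T, hTS, hT, hTbdd⟩ := hQ.exists_infinite_subset_bddAbove_image Prod.snd hn
  obtain ⟨T₀, hT₀T, hT₀, hT₀inf⟩ := hT.exists_subset_countable_infinite
  have hfst : BddAbove (Prod.fst '' T₀) :=
    hrel n _ (image_subset_iff.2 fun s hs => (hTS (hT₀T hs)).2) (hT₀.image _)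
  exact ⟨T₀, fun s hs => (hTS (hT₀T hs)).1, hT₀inf,
    bddAbove_prod.2 ⟨hfst, hTbdd.mono (image_mono hT₀T)⟩⟩

/-- if `P = ⋃_n P_n` where every countable subset of each `P_n`
is bounded in `P`, then `P` is productively calibre `(ω₁,ω)`. -/
theorem sigma_relative_calibre_omega_productive {P : Type u} [PartialOrder P]
    (hPdir : ∀ F : Set P, F.Finite → BddAbove F)
    (Pn : ℕ → Set P) (hcover : (⋃ k, Pn k) = Set.univ)
    (hrel : ∀ k, ∀ S ⊆ Pn k, S.Countable → BddAbove S) :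
    ∀ (Q : Type v) [PartialOrder Q],
      (∀ F : Set Q, F.Finite → BddAbove F) →
      CalibreO1O Q → CalibreO1O (P × Q) :=
  sigma_relative_calibre_omega_productive_general Pn hcover hrel
end

section
/- Let P be a directed set such that P = ⋃_{n<ω} P_n where each P_n has relative calibre ω in P (every countable subset of P_n is bounded in P). Then P is powerfully calibre (ω₁,ω): the countable power P^ω, with the coordinatewise order, has calibre (ω₁,ω). -/
open Cardinal Set

/-!
Choose for every `x : P` an index `k` with `x ∈ P_k`. Given an uncountable `S ⊆ P^ω`, shrink it
coordinate by coordinate to uncountable sets on which the index of the `m`-th coordinate is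
constant, and pick distinct points along this decreasing sequence. The resulting infinite subset
of `S` has, in each coordinate, a countable set of values lying in finitely many `P_k`; a finite
union of sets of relative calibre `ω` in a directed set again has relative calibre `ω`, so each
coordinate is bounded, and hence so is the subset.
-/

section Combinatorics

variable {α β : Type*}

theorem exists_not_countable_inter_preimage_singleton [Countable β] (g : α → β) {A : Set α}
    (hA : ¬A.Countable) : ∃ b, ¬(A ∩ g ⁻¹' {b}).Countable := by
  by_contra! h
  refine hA ((countable_iUnion h).mono fun x hx => ?_)
  exact mem_iUnion.2 ⟨g x, hx, rfl⟩

theorem exists_antitone_not_countable_apply_eq [Countable β] (g : α → ℕ → β) {S : Set α}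
    (hS : ¬S.Countable) :
    ∃ F : ℕ → Set α, F 0 = S ∧ Antitone F ∧ (∀ n, ¬(F n).Countable) ∧
      ∀ m, ∃ b, ∀ x ∈ F (m + 1), g x m = b := by
  choose b hb using fun (A : {A : Set α // ¬A.Countable}) m =>
    exists_not_countable_inter_preimage_singleton (g · m) A.2
  let F : ℕ → {A : Set α // ¬A.Countable} := fun n =>
    Nat.rec ⟨S, hS⟩ (fun m A => ⟨A.1 ∩ (g · m) ⁻¹' {b A m}, hb A m⟩) n
  exact ⟨fun n => (F n).1, rfl, antitone_nat_of_succ_le fun _ => inter_subset_left,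
    fun n => (F n).2, fun m => ⟨b (F m) m, fun _ hx => hx.2⟩⟩

theorem exists_injective_forall_mem_of_antitone {F : ℕ → Set α} (hF : Antitone F)
    (hinf : ∀ n, (F n).Infinite) :
    ∃ f : ℕ → α, Function.Injective f ∧ ∀ n, f n ∈ F n := by
  classical
  -- Carry the stage along with the point: stages increase strictly and points never repeat.
  obtain ⟨f, hfF, hf⟩ := exists_seq_of_forall_finset_exists (fun p : ℕ × α => p.2 ∈ F p.1)
    (fun p q => p.1 < q.1 ∧ p.2 ≠ q.2) fun s _ => by
      obtain ⟨y, hy, hys⟩ :=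
        (hinf (s.sup Prod.fst + 1)).exists_notMem_finset (s.image Prod.snd)
      exact ⟨(s.sup Prod.fst + 1, y), hy, fun p hp =>
        ⟨Nat.lt_succ_of_le (s.le_sup hp), fun h => hys (Finset.mem_image.2 ⟨p, hp, h⟩)⟩⟩
  have hmono : StrictMono fun n => (f n).1 :=
    strictMono_nat_of_lt_succ fun n => (hf n _ n.lt_succ_self).1
  refine ⟨fun n => (f n).2, fun m n hmn => ?_, fun n => hF (hmono.id_le n) (hfF n)⟩
  by_contra hne
  rcases Ne.lt_or_gt hne with h | h
  · exact (hf m n h).2 hmn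
  · exact (hf n m h).2 hmn.symm

theorem exists_injective_finite_range_apply [Countable β] (g : α → ℕ → β) {S : Set α}
    (hS : ¬S.Countable) :
    ∃ f : ℕ → α, Function.Injective f ∧ range f ⊆ S ∧
      ∀ m, (range fun n => g (f n) m).Finite := by
  obtain ⟨F, hF0, hF, hFc, hconst⟩ := exists_antitone_not_countable_apply_eq g hS
  obtain ⟨f, hf, hfF⟩ :=
    exists_injective_forall_mem_of_antitone hF fun n hfin => hFc n hfin.countable
  refine ⟨f, hf, range_subset_iff.2 fun n => hF0 ▸ hF (Nat.zero_le n) (hfF n), fun m => ?_⟩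
  obtain ⟨b, hb⟩ := hconst m
  refine (((finite_Iic m).image fun n => g (f n) m).union (finite_singleton b)).subset ?_
  rintro _ ⟨n, rfl⟩
  rcases le_or_gt n m with h | h
  · exact Or.inl ⟨n, h, rfl⟩
  · exact Or.inr (hb _ (hF h (hfF n)))

end Combinatorics

section RelativeCalibre

variable {P ι : Type*} [Preorder P]

def RelCalibreOmega (Q : Set P) : Prop :=
  ∀ S ⊆ Q, S.Countable → BddAbove S

theorem RelCalibreOmega.biUnion (hdir : ∀ F : Set P, F.Finite → BddAbove F) {Q : ι → Set P}
    {s : Set ι} (hs : s.Finite) (hQ : ∀ i ∈ s, RelCalibreOmega (Q i)) :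
    RelCalibreOmega (⋃ i ∈ s, Q i) := by
  intro S hSQ hS
  obtain ⟨p, -⟩ := hdir ∅ finite_empty
  have : Nonempty P := ⟨p⟩
  choose! u hu using fun i hi => hQ i hi (S ∩ Q i) inter_subset_right (hS.mono inter_subset_left)
  obtain ⟨c, hc⟩ := hdir (u '' s) (hs.image u)
  refine ⟨c, fun x hx => ?_⟩
  obtain ⟨i, hi, hxi⟩ := mem_iUnion₂.1 (hSQ hx)
  exact (hu i hi ⟨hx, hxi⟩).trans (hc (mem_image_of_mem u hi))

end RelativeCalibre

/-- if `P = ⋃_n P_n` where every countable subset of each `P_n`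
is bounded in `P`, then `P` is powerfully calibre `(ω₁,ω)`: the countable power
`P^ω` has calibre `(ω₁,ω)`. -/
theorem sigma_relative_calibre_omega_powerful {P : Type u} [PartialOrder P]
    (hPdir : ∀ F : Set P, F.Finite → BddAbove F)
    (Pn : ℕ → Set P) (hcover : (⋃ k, Pn k) = Set.univ)
    (hrel : ∀ k, ∀ S ⊆ Pn k, S.Countable → BddAbove S) :
    CalibreO1O (ℕ → P) := by
  intro S hS
  choose idx hidx using fun x : P => mem_iUnion.1 (hcover ▸ mem_univ x)
  obtain ⟨f, hf, hfS, hfin⟩ := exists_injective_finite_range_apply (fun y m => idx (y m)) hS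
  refine ⟨range f, hfS, infinite_range_of_injective hf, bddAbove_pi.2 fun m => ?_⟩
  refine RelCalibreOmega.biUnion hPdir (hfin m) (fun k _ => hrel k) _ ?_
    ((countable_range f).image _)
  rintro _ ⟨_, ⟨n, rfl⟩, rfl⟩
  exact mem_iUnion₂.2 ⟨_, ⟨n, rfl⟩, hidx _⟩
end

section
/- Let P be a topological directed set whose topology is second countable and which is CSBS (every convergent sequence has a subsequence bounded in P). Then P is powerfully calibre (ω₁,ω): the countable power P^ω, with the coordinatewise order, has calibre (ω₁,ω). -/
open Cardinal Set

/-- a second countable CSBS topological directed set is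
powerfully calibre `(ω₁,ω)`: its countable power has calibre `(ω₁,ω)`. -/
theorem second_countable_CSBS_powerful {P : Type*} [PartialOrder P]
    [TopologicalSpace P] [SecondCountableTopology P]
    (hdir : ∀ F : Set P, F.Finite → BddAbove F)
    (hcsbs : CSBS P) :
    CalibreO1O (ℕ → P) := by
  classical
  intro S hS
  -- Step 1: find a condensation point `s ∈ S`.
  obtain ⟨s, hsS, hs⟩ : ∃ s ∈ S, ∀ U ∈ nhds s, ¬ (U ∩ S).Countable := by
    by_contra h
    push_neg at h
    apply hS
    set B := TopologicalSpace.countableBasis (ℕ → P) with hB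
    have hcover : S ⊆ ⋃ b ∈ {b ∈ B | (b ∩ S).Countable}, b ∩ S := by
      intro t ht
      obtain ⟨U, hU, hUc⟩ := h t ht
      obtain ⟨b, hbB, htb, hbU⟩ :=
        (TopologicalSpace.isBasis_countableBasis (ℕ → P)).mem_nhds_iff.mp hU
      refine mem_biUnion ⟨hbB, hUc.mono (inter_subset_inter_left S hbU)⟩ ⟨htb, ht⟩
    refine Set.Countable.mono hcover ?_
    exact Set.Countable.biUnion
      ((TopologicalSpace.countable_countableBasis (ℕ → P)).mono (sep_subset _ _))
      (fun b hb => hb.2)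
  -- Step 2: antitone neighborhood basis at `s`.
  obtain ⟨V, hV⟩ := Filter.exists_antitone_basis (nhds s)
  have hVmem : ∀ n, V n ∈ nhds s := fun n => hV.1.mem_of_mem trivial
  -- Step 3: a sequence of distinct points of `S` converging to `s`.
  have key : ∀ (n : ℕ) (L : List (ℕ → P)), ∃ p, (p ∈ V n ∩ S) ∧ p ∉ L := by
    intro n L
    have hinf : (V n ∩ S).Infinite := fun hfin => hs (V n) (hVmem n) hfin.countable
    obtain ⟨p, hp⟩ := (hinf.diff L.finite_toSet).nonempty
    exact ⟨p, hp.1, hp.2⟩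
  choose h hh1 hh2 using key
  set A : ℕ → List (ℕ → P) := fun n => Nat.rec [] (fun m L => h m L :: L) n with hA
  set x : ℕ → (ℕ → P) := fun n => h n (A n) with hx
  have hAsucc : ∀ n, A (n + 1) = x n :: A n := fun n => rfl
  have hxV : ∀ n, x n ∈ V n := fun n => (hh1 n (A n)).1
  have hxS : ∀ n, x n ∈ S := fun n => (hh1 n (A n)).2
  have hxA : ∀ n, x n ∉ A n := fun n => hh2 n (A n)
  have hmemA : ∀ n m, m < n → x m ∈ A n := by
    intro n
    induction n with
    | zero => omega
    | succ n ih =>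
      intro m hm
      rw [hAsucc]
      rcases Nat.lt_succ_iff_lt_or_eq.mp hm with hm' | hm'
      · exact List.mem_cons_of_mem _ (ih m hm')
      · subst hm'; exact List.mem_cons_self
  have hinj : Function.Injective x := by
    intro m n hmn
    rcases Nat.lt_trichotomy m n with hlt | heq | hlt
    · exact absurd (hmn ▸ hmemA n m hlt) (hxA n)
    · exact heq
    · exact absurd (hmn ▸ hmemA m n hlt) (hxA m)
  have hx_tendsto : Filter.Tendsto x Filter.atTop (nhds s) := hV.tendsto hxV
  have hcoord : ∀ k, Filter.Tendsto (fun n => x n k) Filter.atTop (nhds (s k)) :=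
    tendsto_pi_nhds.mp hx_tendsto
  -- Step 4: diagonal subsequence bounded in each coordinate.
  have hstep : ∀ (τ : ℕ → ℕ) (k : ℕ), StrictMono τ →
      ∃ φ : ℕ → ℕ, StrictMono φ ∧ BddAbove (Set.range (fun n => x (τ (φ n)) k)) := by
    intro τ k hτ
    have ht : Filter.Tendsto (fun n => x (τ n) k) Filter.atTop (nhds (s k)) :=
      (hcoord k).comp hτ.tendsto_atTop
    obtain ⟨φ, hφ, hbdd⟩ := hcsbs (fun n => x (τ n) k) (s k) ht
    exact ⟨φ, hφ, hbdd⟩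
  choose! Φ hΦmono hΦbdd using hstep
  set σ : ℕ → ℕ → ℕ := fun k => Nat.rec id (fun t τ => τ ∘ Φ τ t) k with hσ
  have hσsucc : ∀ t, σ (t + 1) = σ t ∘ Φ (σ t) t := fun t => rfl
  have hσmono : ∀ k, StrictMono (σ k) := by
    intro k
    induction k with
    | zero => exact strictMono_id
    | succ t ih => exact ih.comp (hΦmono (σ t) t ih)
  have hbdd : ∀ k, BddAbove (Set.range (fun n => x (σ (k + 1) n) k)) := by
    intro k
    have := hΦbdd (σ k) k (hσmono k)
    rw [hσsucc]
    exact this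
  set ψ : ℕ → ℕ := fun n => σ n n with hψdef
  have hψ : StrictMono ψ := by
    apply strictMono_nat_of_lt_succ
    intro n
    have h1 : n < Φ (σ n) n (n + 1) :=
      lt_of_lt_of_le (Nat.lt_succ_self n) ((hΦmono (σ n) n (hσmono n)).le_apply)
    calc σ n n < σ n (Φ (σ n) n (n + 1)) := hσmono n h1
    _ = σ (n + 1) (n + 1) := rfl
  have hcomp : ∀ k j n, ∃ m, σ (k + 1 + j) n = σ (k + 1) m := by
    intro k j
    induction j with
    | zero => exact fun n => ⟨n, rfl⟩
    | succ j ih =>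
      intro n
      have : σ (k + 1 + (j + 1)) n = σ (k + 1 + j) (Φ (σ (k + 1 + j)) (k + 1 + j) n) := rfl
      rw [this]
      exact ih _
  -- Step 5: assemble the bound.
  have hg : ∀ k, ∃ d, ∀ n, x (ψ n) k ≤ d := by
    intro k
    obtain ⟨b, hb⟩ := hbdd k
    set F : Set P := insert b ((fun n => x (ψ n) k) '' Set.Iic k) with hF
    have hFfin : F.Finite := ((Set.finite_Iic k).image _).insert b
    obtain ⟨d, hd⟩ := hdir F hFfin
    refine ⟨d, fun n => ?_⟩
    rcases le_or_gt n k with hn | hn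
    · exact hd (Set.mem_insert_of_mem _ ⟨n, hn, rfl⟩)
    · obtain ⟨j, hj⟩ : ∃ j, n = k + 1 + j := ⟨n - (k + 1), by omega⟩
      subst hj
      obtain ⟨m, hm⟩ := hcomp k j (k + 1 + j)
      have : x (ψ (k + 1 + j)) k = x (σ (k + 1) m) k := by
        rw [hψdef]; dsimp only; rw [hm]
      rw [this]
      exact le_trans (hb ⟨m, rfl⟩) (hd (Set.mem_insert _ _))
  choose g hg' using hg
  refine ⟨Set.range (x ∘ ψ), ?_, ?_, ⟨g, ?_⟩⟩
  · rintro _ ⟨n, rfl⟩; exact hxS _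
  · exact Set.infinite_range_of_injective (hinj.comp hψ.injective)
  · rintro _ ⟨n, rfl⟩
    exact fun k => hg' k n
end

section
/- Let ω₁ be the set of countable ordinals with the order topology, and let S be a stationary subset of ω₁ (S meets every closed unbounded subset of ω₁). Then S, with the subspace topology, has countable extent: every subset of S that is closed and discrete in the subspace topology of S is countable. -/
open Cardinal Set

/-- `ω₁` carries the order topology. -/
noncomputable instance : TopologicalSpace Omega1 := Preorder.topology Omega1

instance : OrderTopology Omega1 := ⟨rfl⟩

lemma omega1_topology_eq :
    (inferInstance : TopologicalSpace (Set.Iio (Cardinal.aleph 1).ord)) =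
      (inferInstance : TopologicalSpace Omega1) := by
  have h : OrderTopology (Set.Iio (Cardinal.aleph 1).ord) := inferInstance
  exact h.topology_eq_generate_intervals

lemma accPt_omega1 {p : Ordinal} (hp : p < (Cardinal.aleph 1).ord) (B : Set Ordinal) :
    AccPt p (Filter.principal B) ↔
      AccPt (⟨p, hp⟩ : Omega1) (Filter.principal (Subtype.val ⁻¹' B)) := by
  rw [Ordinal.accPt_subtype B hp]
  exact iff_of_eq (congrArg (fun t : TopologicalSpace Omega1 =>
    @AccPt Omega1 t ⟨p, hp⟩ (Filter.principal (Subtype.val ⁻¹' B))) omega1_topology_eq)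

lemma iic_countable (x : Omega1) : (Set.Iic x).Countable := by
  rw [← Set.countable_coe_iff]
  have hlt : (x : Ordinal) + 1 < (Cardinal.aleph 1).ord :=
    (Cardinal.isSuccLimit_ord (Cardinal.aleph0_le_aleph 1)).succ_lt x.2
  have hcount : Countable (Set.Iio ((x : Ordinal) + 1)) := by
    rw [← Cardinal.mk_le_aleph0_iff, Ordinal.mk_Iio_ordinal]
    have h1 : ((x : Ordinal) + 1).card ≤ ℵ₀ := by
      have h2 := Cardinal.lt_ord.mp hlt
      exact Order.lt_succ_iff.mp (lt_of_lt_of_eq h2 Cardinal.succ_aleph0.symm)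
    simpa using Cardinal.lift_le.mpr h1
  refine Function.Injective.countable (β := Set.Iio ((x : Ordinal) + 1))
    (f := fun y => ⟨y.1.1, Set.mem_Iio.mpr
      (lt_of_le_of_lt (Subtype.coe_le_coe.mpr y.2) (lt_add_one _))⟩) ?_
  intro a b hab
  ext1; ext1
  exact congrArg (fun z : Set.Iio ((x : Ordinal) + 1) => z.1) hab

/-- every stationary subset of `ω₁` has countable extent: every
subset which is closed and discrete in the subspace topology is countable. -/
theorem stationary_countable_extent (S : Set Omega1)
    (hstat : ∀ C : Set Omega1, IsClosed C → (∀ x : Omega1, ∃ y ∈ C, x ≤ y) →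
      (S ∩ C).Nonempty) :
    ∀ T : Set S, IsClosed T → DiscreteTopology T → T.Countable := by
  intro T hTclosed hTdisc
  by_contra hTunc
  set A : Set Omega1 := Subtype.val '' T with hAdef
  have hAunc : ¬ A.Countable := by
    intro h
    exact hTunc (((h.preimage Subtype.val_injective)).mono (Set.subset_preimage_image _ _))
  have hAS : A ⊆ S := by rintro _ ⟨t, _, rfl⟩; exact t.2
  have hubdd : ∀ x : Omega1, ∃ y ∈ A, x < y := by
    intro x
    by_contra h
    push_neg at h
    exact hAunc ((iic_countable x).mono (fun y hy => h y hy))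
  choose F hF1 hF2 using hubdd
  have hCub : ∀ x : Omega1, ∃ y ∈ derivedSet A, x ≤ y := by
    intro x
    let f : ℕ → Omega1 := fun n => Nat.rec (F x) (fun _ y => F y) n
    have hfA : ∀ n, f n ∈ A := by
      intro n
      cases n with
      | zero => exact hF1 x
      | succ m => exact hF1 (f m)
    have hsucc : ∀ n, f (n + 1) = F (f n) := fun n => rfl
    have hstep : ∀ n, (f n).1 < (f (n + 1)).1 := by
      intro n
      rw [hsucc n]
      exact Subtype.coe_lt_coe.mpr (hF2 (f n))
    have hmono : StrictMono (fun n => (f n).1) :=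
      strictMono_nat_of_lt_succ hstep
    set o : Ordinal := ⨆ n, (f n).1 with hodef
    have hle : ∀ n, (f n).1 ≤ o := fun n => Ordinal.le_iSup _ n
    have hoω : o < (Cardinal.aleph 1).ord := by
      apply Cardinal.iSup_lt_ord_lift_of_isRegular Cardinal.isRegular_aleph_one
      · simpa using Cardinal.aleph0_lt_aleph_one
      · exact fun n => (f n).2
    have hflt : ∀ n, (f n).1 < o :=
      fun n => lt_of_lt_of_le (hmono (Nat.lt_succ_self n)) (hle (n + 1))
    have hacc : Ordinal.IsAcc o (Subtype.val '' A) := by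
      rw [Ordinal.isAcc_iff]
      refine ⟨?_, ?_⟩
      · intro h0
        exact absurd (h0 ▸ hflt 0) (not_lt_of_ge zero_le)
      · intro p hp
        obtain ⟨n, hn⟩ := Ordinal.lt_iSup_iff.mp hp
        exact ⟨(f n).1, ⟨f n, hfA n, rfl⟩, hn, hflt n⟩
    have haccA : AccPt (⟨o, hoω⟩ : Omega1) (Filter.principal A) := by
      have h := (accPt_omega1 hoω (Subtype.val '' A)).mp hacc
      rwa [Set.preimage_image_eq A Subtype.val_injective] at h
    refine ⟨⟨o, hoω⟩, haccA, le_of_lt ?_⟩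
    exact Subtype.coe_lt_coe.mp (lt_of_lt_of_le (Subtype.coe_lt_coe.mpr (hF2 x)) (hle 0))
  obtain ⟨s, hsS, hsC⟩ := hstat (derivedSet A) (isClosed_derivedSet A) hCub
  have hne : (nhdsWithin s {s}ᶜ ⊓ Filter.principal A).NeBot := hsC
  have hind : Topology.IsInducing (Subtype.val : S → Omega1) := Topology.IsInducing.subtypeVal
  have hpre : (Subtype.val : S → Omega1) ⁻¹' {s} = {(⟨s, hsS⟩ : S)} := by
    ext t
    simp [Subtype.ext_iff]
  have hcomap : Filter.comap (Subtype.val : S → Omega1)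
      (nhdsWithin s {s}ᶜ ⊓ Filter.principal A)
      = nhdsWithin (⟨s, hsS⟩ : S) {(⟨s, hsS⟩ : S)}ᶜ ⊓ Filter.principal T := by
    have hn : Filter.comap (Subtype.val : S → Omega1) (nhds s) = nhds (⟨s, hsS⟩ : S) :=
      (hind.nhds_eq_comap ⟨s, hsS⟩).symm
    rw [nhdsWithin, nhdsWithin, Filter.comap_inf, Filter.comap_inf, Filter.comap_principal,
      Filter.comap_principal, hn, Set.preimage_image_eq T Subtype.val_injective,
      Set.preimage_compl, hpre]
  have haccT : (nhdsWithin (⟨s, hsS⟩ : S) {(⟨s, hsS⟩ : S)}ᶜ ⊓ Filter.principal T).NeBot := by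
    rw [← hcomap]
    apply hne.comap_of_range_mem
    rw [Subtype.range_coe]
    exact Filter.mem_inf_of_right (Filter.mem_principal.mpr hAS)
  have haccT' : AccPt (⟨s, hsS⟩ : S) (Filter.principal T) := haccT
  have hsT : (⟨s, hsS⟩ : S) ∈ T := by
    have hmem : (⟨s, hsS⟩ : S) ∈ closure T := mem_closure_iff_clusterPt.mpr haccT'.clusterPt
    rwa [hTclosed.closure_eq] at hmem
  rw [discreteTopology_subtype_iff] at hTdisc
  exact haccT.ne (hTdisc _ hsT)
end

section
/- Let M be a separable metrizable space, D a dense subset of M, and K a compact subset of M disjoint from D. Then there is a subset D' of D which is discrete in the subspace topology and whose closure in M is exactly D' ∪ K. -/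
open Set TopologicalSpace
open Filter Topology

/-- if `M` is separable metrizable, `D` is dense in `M`, and `K`
is a compact set disjoint from `D`, then there is a discrete subset `D'` of `D`
whose closure in `M` is exactly `D' ∪ K`. -/
theorem discrete_set_with_closure_adding_compact {M : Type*} [TopologicalSpace M]
    [MetrizableSpace M] [SeparableSpace M]
    (D : Set M) (hD : Dense D) (K : Set M) (hK : IsCompact K)
    (hdisj : Disjoint D K) :
    ∃ D' ⊆ D, DiscreteTopology D' ∧ closure D' = D' ∪ K := by
  letI : MetricSpace M := TopologicalSpace.metrizableSpaceMetric M
  rcases K.eq_empty_or_nonempty with rfl | hKne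
  · refine ⟨∅, empty_subset _, ?_, by simp⟩
    have : Subsingleton (∅ : Set M) := by
      constructor; rintro ⟨x, hx⟩; exact absurd hx (notMem_empty x)
    exact Subsingleton.discreteTopology
  set ε : ℕ → ℝ := fun n => (2 : ℝ)⁻¹ ^ n with hεdef
  have hεpos : ∀ n, 0 < ε n := fun n => pow_pos (by norm_num) n
  have hεanti : ∀ {m n : ℕ}, m ≤ n → ε n ≤ ε m := fun {m n} h =>
    pow_le_pow_of_le_one (by norm_num) (by norm_num) h
  have hεsmall : ∀ c : ℝ, 0 < c → ∃ N, ε N < c := fun c hc =>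
    exists_pow_lt_of_lt_one hc (by norm_num)
  -- choice of nearby dense points
  have hDch : ∀ (y : M) (n : ℕ), ∃ d, d ∈ D ∧ dist y d < ε n := by
    intro y n
    rcases Metric.dense_iff.mp hD y (ε n) (hεpos n) with ⟨d, hd1, hd2⟩
    exact ⟨d, hd2, Metric.mem_ball'.mp hd1⟩
  choose f hfD hfd using hDch
  -- covers of K by balls centered in K
  have hcov : ∀ n : ℕ, ∃ t : Set M, t ⊆ K ∧ t.Finite ∧
      K ⊆ ⋃ y ∈ t, Metric.ball y (ε n) := by
    intro n
    rcases hK.totallyBounded.exists_subset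
        (Metric.dist_mem_uniformity (hεpos n)) with ⟨t, htK, htfin, hcov⟩
    exact ⟨t, htK, htfin, hcov⟩
  choose t htK htfin htcov using hcov
  set F : ℕ → Set M := fun n => (fun y => f y n) '' t n with hFdef
  have hFfin : ∀ n, (F n).Finite := fun n => (htfin n).image _
  have hFD : ∀ n, F n ⊆ D := by
    rintro n d ⟨y, _, rfl⟩; exact hfD y n
  have hFnear : ∀ n, ∀ d ∈ F n, Metric.infDist d K < ε n := by
    rintro n d ⟨y, hy, rfl⟩
    calc Metric.infDist (f y n) K ≤ dist (f y n) y := Metric.infDist_le_dist_of_mem (htK n hy)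
      _ < ε n := by rw [dist_comm]; exact hfd y n
  have hFapprox : ∀ x ∈ K, ∀ n, ∃ d ∈ F n, dist x d < 2 * ε n := by
    intro x hx n
    rcases mem_iUnion₂.mp (htcov n hx) with ⟨y, hy, hxy⟩
    refine ⟨f y n, mem_image_of_mem _ hy, ?_⟩
    calc dist x (f y n) ≤ dist x y + dist y (f y n) := dist_triangle _ _ _
      _ < ε n + ε n := add_lt_add (Metric.mem_ball.mp hxy) (hfd y n)
      _ = 2 * ε n := by ring
  set D' : Set M := ⋃ n, F n with hD'def
  have hD'D : D' ⊆ D := iUnion_subset hFD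
  -- key finiteness lemma
  have hfin : ∀ c : ℝ, 0 < c → {d | d ∈ D' ∧ c ≤ Metric.infDist d K}.Finite := by
    intro c hc
    rcases hεsmall c hc with ⟨N, hN⟩
    apply Finite.subset ((finite_Iio N).biUnion (fun n _ => hFfin n))
    rintro d ⟨hd, hcd⟩
    rcases mem_iUnion.mp hd with ⟨n, hn⟩
    refine mem_biUnion (mem_Iio.mpr ?_) hn
    by_contra h
    have h1 : c < ε n := lt_of_le_of_lt hcd (hFnear n d hn)
    have h2 : ε n ≤ ε N := hεanti (le_of_not_gt h)
    linarith
  -- points of D' are at positive distance from K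
  have hpos : ∀ d ∈ D', 0 < Metric.infDist d K := by
    intro d hd
    refine (hK.isClosed.notMem_iff_infDist_pos hKne).mp ?_
    exact fun hdK => hdisj.ne_of_mem (hD'D hd) hdK rfl
  -- local finiteness near any point at positive distance from K
  have hloc : ∀ x : M, ∀ c : ℝ, 0 < c → c ≤ Metric.infDist x K →
      (D' ∩ Metric.ball x (c / 2)).Finite := by
    intro x c hc hcx
    apply (hfin (c / 2) (by linarith)).subset
    rintro d ⟨hd, hball⟩
    refine ⟨hd, ?_⟩
    have h1 : Metric.infDist x K ≤ Metric.infDist d K + dist x d :=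
      Metric.infDist_le_infDist_add_dist
    have h2 : dist x d < c / 2 := Metric.mem_ball'.mp hball
    linarith
  refine ⟨D', hD'D, ?_, ?_⟩
  · -- discreteness
    rw [discreteTopology_subtype_iff]
    intro x hx
    have heq : 𝓝[≠] x ⊓ Filter.principal D' = 𝓝[D' \ {x}] x := by
      rw [nhdsWithin, nhdsWithin, inf_assoc, inf_principal, diff_eq, inter_comm]
    rw [heq, ← Filter.not_neBot]
    intro hne
    have hxcl : x ∈ closure (D' \ {x}) := mem_closure_iff_nhdsWithin_neBot.mpr hne
    set c := Metric.infDist x K with hcdef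
    have hc : 0 < c := hpos x hx
    have hTfin : ((D' ∩ Metric.ball x (c / 2)) \ {x}).Finite := (hloc x c hc le_rfl).diff
    have hxT : x ∉ (D' ∩ Metric.ball x (c / 2)) \ {x} := fun h => h.2 rfl
    obtain ⟨r, hr, hrT⟩ := Metric.isOpen_iff.mp hTfin.isClosed.isOpen_compl x hxT
    obtain ⟨d, hdT, hdist⟩ := Metric.mem_closure_iff.mp hxcl (min r (c / 2))
      (lt_min hr (by linarith))
    have hd1 : d ∈ Metric.ball x (c / 2) :=
      Metric.mem_ball'.mp (lt_of_lt_of_le hdist (min_le_right _ _))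
    have hd3 : d ∈ Metric.ball x r :=
      Metric.mem_ball'.mp (lt_of_lt_of_le hdist (min_le_left _ _))
    exact hrT hd3 ⟨⟨hdT.1, hd1⟩, hdT.2⟩
  · -- closure D' = D' ∪ K
    apply Subset.antisymm
    · intro x hx
      by_cases hxK : x ∈ K
      · exact Or.inr hxK
      · left
        have hc : 0 < Metric.infDist x K := (hK.isClosed.notMem_iff_infDist_pos hKne).mp hxK
        set c := Metric.infDist x K with hcdef
        have hSfin : (D' ∩ Metric.ball x (c / 2)).Finite := hloc x c hc le_rfl
        have hsplit : D' = (D' ∩ Metric.ball x (c / 2)) ∪ (D' \ Metric.ball x (c / 2)) :=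
          (inter_union_diff _ _).symm
        rw [hsplit, closure_union] at hx
        rcases hx with hx | hx
        · rw [hSfin.isClosed.closure_eq] at hx
          exact hx.1
        · exfalso
          have h1 : closure (D' \ Metric.ball x (c / 2)) ⊆ (Metric.ball x (c / 2))ᶜ :=
            closure_minimal (fun d hd => hd.2) Metric.isOpen_ball.isClosed_compl
          exact h1 hx (Metric.mem_ball_self (by linarith))
    · refine union_subset subset_closure ?_
      intro x hxK
      rw [Metric.mem_closure_iff]
      intro δ hδ
      obtain ⟨N, hN⟩ := hεsmall (δ / 2) (by linarith)
      obtain ⟨d, hdF, hdd⟩ := hFapprox x hxK N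
      exact ⟨d, mem_iUnion.mpr ⟨N, hdF⟩, by linarith⟩
end

section
/- Let P be a topological directed set whose topology is second countable and which is CSBS (every convergent sequence has a subsequence bounded in P). Then P does not Tukey quotient to ∑ω^{ω₁}: there is no map φ : P → ∑ω^{ω₁} taking every cofinal subset of P to a cofinal subset of ∑ω^{ω₁}. -/
open Cardinal Set

/-- The Σ-product `∑ω^{ω₁}`: functions from `ω₁` to `ℕ` with countable support,
ordered pointwise. -/
abbrev SigmaOmegaPow : Type 1 := {f : Omega1 → ℕ // {a | f a ≠ 0}.Countable}

/-! ### Auxiliary facts about `Omega1` -/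

/-- `ω₁` is not countable. -/
lemma omega1_not_countable : ¬ (Set.univ : Set Omega1).Countable := by
  intro h
  have hc : Countable Omega1 := Set.countable_univ_iff.mp h
  have hmk : #Omega1 ≤ ℵ₀ := Cardinal.mk_le_aleph0_iff.mpr hc
  have heq : #Omega1 = Cardinal.lift.{1} ((Cardinal.aleph 1).ord.card) :=
    Ordinal.mk_Iio_ordinal ((Cardinal.aleph 1).ord)
  rw [heq, Cardinal.card_ord] at hmk
  have : Cardinal.aleph 1 ≤ ℵ₀ := by
    rw [← Cardinal.lift_aleph0.{1,0}] at hmk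
    exact Cardinal.lift_le.mp hmk
  exact absurd (lt_of_lt_of_le Cardinal.aleph0_lt_aleph_one this) (lt_irrefl _)

/-- Initial segments of `ω₁` are countable. -/
lemma omega1_Iic_countable (γ : Omega1) : {β : Omega1 | β ≤ γ}.Countable := by
  have hlt : Order.succ γ.1 < (Cardinal.aleph 1).ord :=
    (Cardinal.isSuccLimit_ord (Cardinal.aleph0_le_aleph 1)).succ_lt γ.2
  have hcard : (Order.succ γ.1).card ≤ ℵ₀ := by
    have h := Cardinal.lt_ord.mp hlt
    exact Order.lt_succ_iff.mp (lt_of_lt_of_eq h Cardinal.succ_aleph0.symm)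
  have hcnt : Countable ↥(Set.Iio (Order.succ γ.1)) := by
    have hmk : #↥(Set.Iio (Order.succ γ.1)) = Cardinal.lift.{1} (Order.succ γ.1).card :=
      Ordinal.mk_Iio_ordinal _
    refine Cardinal.mk_le_aleph0_iff.mp ?_
    rw [hmk, ← Cardinal.lift_aleph0.{1,0}]
    exact Cardinal.lift_le.mpr hcard
  rw [← Set.countable_coe_iff]
  have hf : Function.Injective
      (fun b : {β : Omega1 | β ≤ γ} => (⟨b.1.1, lt_of_le_of_lt b.2 (Order.lt_succ γ.1)⟩ :
        ↥(Set.Iio (Order.succ γ.1)))) := by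
    intro a b hab
    simp only [Subtype.mk.injEq] at hab
    have hab' := congrArg Subtype.val hab
    exact Subtype.ext (Subtype.ext hab')
  exact Function.Injective.countable hf

/-- An uncountable set of countable ordinals is unbounded. -/
lemma exists_gt_of_not_countable {B : Set Omega1} (hB : ¬ B.Countable) (γ : Omega1) :
    ∃ β ∈ B, γ < β := by
  by_contra h
  push_neg at h
  exact hB ((omega1_Iic_countable γ).mono fun β hβ => h β hβ)

/-- Recursive choice of a strictly increasing selection from a sequence of
unbounded subsets of `ω₁`. -/
noncomputable def pickSeq (B : ℕ → Set Omega1) (o0 : Omega1)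
    (hB : ∀ (k : ℕ) (γ : Omega1), ∃ β ∈ B k, γ < β) : ℕ → Omega1
  | 0 => (hB 0 o0).choose
  | (k+1) => (hB (k+1) (pickSeq B o0 hB k)).choose

lemma pickSeq_mem (B : ℕ → Set Omega1) (o0 : Omega1)
    (hB : ∀ (k : ℕ) (γ : Omega1), ∃ β ∈ B k, γ < β) (k : ℕ) :
    pickSeq B o0 hB k ∈ B k := by
  cases k with
  | zero => exact (hB 0 o0).choose_spec.1
  | succ k => exact (hB (k+1) (pickSeq B o0 hB k)).choose_spec.1

lemma pickSeq_strictMono (B : ℕ → Set Omega1) (o0 : Omega1)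
    (hB : ∀ (k : ℕ) (γ : Omega1), ∃ β ∈ B k, γ < β) :
    StrictMono (pickSeq B o0 hB) := by
  apply strictMono_nat_of_lt_succ
  intro k
  exact (hB (k+1) (pickSeq B o0 hB k)).choose_spec.2

/-- no second countable CSBS topological directed set Tukey
quotients onto `∑ω^{ω₁}`. -/
theorem no_second_countable_CSBS_above_sigma_omega_pow {P : Type*}
    [PartialOrder P] [TopologicalSpace P]
    [SecondCountableTopology P]
    (hdir : ∀ F : Set P, F.Finite → BddAbove F)
    (hcsbs : CSBS P) :
    ¬ ∃ φ : P → SigmaOmegaPow,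
      ∀ C : Set P, (∀ p : P, ∃ c ∈ C, p ≤ c) →
        ∀ q : SigmaOmegaPow, ∃ c ∈ φ '' C, q ≤ c := by
  rintro ⟨φ, hφ⟩
  classical
  rcases isEmpty_or_nonempty P with hP | hP
  · -- degenerate case : `P` is empty
    obtain ⟨c, hc, -⟩ := hφ ∅ (fun p => (IsEmpty.false p).elim)
      ⟨fun _ => 0, by simp⟩
    rw [Set.image_empty] at hc
    exact absurd hc (Set.notMem_empty c)
  -- Step 1 : a "Tukey map" `Ψ` in the other direction.
  have hPsi : ∀ q : SigmaOmegaPow, ∃ w : P, ∀ p : P, w ≤ p → q ≤ φ p := by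
    intro q
    by_contra hcon
    push_neg at hcon
    obtain ⟨c, hcC, hqc⟩ := hφ {p : P | ¬ q ≤ φ p}
      (fun r => by
        obtain ⟨p, hrp, hnq⟩ := hcon r
        exact ⟨p, hnq, hrp⟩) q
    obtain ⟨p, hpC, rfl⟩ := hcC
    exact hpC hqc
  choose Ψ hΨ using hPsi
  -- Step 2 : enumerate a countable basis.
  obtain ⟨s₀, hs₀⟩ : (TopologicalSpace.countableBasis P).Nonempty := by
    obtain ⟨x⟩ := hP
    obtain ⟨s, hs, -, -⟩ :=
      (TopologicalSpace.isBasis_countableBasis P).exists_subset_of_mem_open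
        (Set.mem_univ x) isOpen_univ
    exact ⟨s, hs⟩
  obtain ⟨b, hbrange⟩ :=
    (TopologicalSpace.countable_countableBasis P).exists_eq_range ⟨s₀, hs₀⟩
  have hbasis : ∀ (x : P) (O : Set P), IsOpen O → x ∈ O →
      ∃ m : ℕ, x ∈ b m ∧ b m ⊆ O := by
    intro x O hO hxO
    obtain ⟨v, hvB, hxv, hvO⟩ :=
      (TopologicalSpace.isBasis_countableBasis P).exists_subset_of_mem_open hxO hO
    rw [hbrange] at hvB
    obtain ⟨m, rfl⟩ := hvB
    exact ⟨m, hxv, hvO⟩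
  -- Step 3 : the key local escape property, via CSBS.
  have key : ∀ (β : Omega1) (x : P), ∃ mn : ℕ × ℕ, x ∈ b mn.1 ∧
      ∀ y ∈ b mn.1, ∀ q : SigmaOmegaPow, mn.2 ≤ q.1 β → ¬ Ψ q ≤ y := by
    intro β x
    by_contra hcon
    push_neg at hcon
    -- from the negation : arbitrarily deep elements in every neighbourhood of `x`
    have step : ∀ (n : ℕ) (V : Set P), V ∈ nhds x →
        ∃ y ∈ V, ∃ q : SigmaOmegaPow, n ≤ q.1 β ∧ Ψ q ≤ y := by
      intro n V hV
      obtain ⟨O, hOV, hO, hxO⟩ := mem_nhds_iff.mp hV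
      obtain ⟨m, hxm, hmO⟩ := hbasis x O hO hxO
      obtain ⟨y, hy, q, hq1, hq2⟩ := hcon (m, n) hxm
      exact ⟨y, hOV (hmO hy), q, hq1, hq2⟩
    obtain ⟨V, hV⟩ := Filter.exists_antitone_basis (nhds x)
    have hy : ∀ m : ℕ, ∃ y ∈ V m, ∃ q : SigmaOmegaPow, m ≤ q.1 β ∧ Ψ q ≤ y :=
      fun m => step m (V m) (hV.toHasBasis.mem_of_mem trivial)
    choose y hyV q hq1 hq2 using hy
    obtain ⟨σ, hσ, hbdd⟩ := hcsbs y x (hV.tendsto hyV)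
    obtain ⟨p, hp⟩ := hbdd
    have hall : ∀ k : ℕ, k ≤ (φ p).1 β := by
      intro k
      have h1 : Ψ (q (σ k)) ≤ p :=
        le_trans (hq2 (σ k)) (hp (Set.mem_range_self k))
      have h2 : q (σ k) ≤ φ p := hΨ (q (σ k)) p h1
      have h3 : (q (σ k)).1 β ≤ (φ p).1 β := (Subtype.coe_le_coe.2 h2) β
      exact le_trans (le_trans hσ.le_apply (hq1 (σ k))) h3
    exact absurd (hall ((φ p).1 β + 1)) (by omega)
  -- Step 4 : pigeonhole over `ω₁` for each point `x`.
  have key2 : ∀ x : P, ∃ mn : ℕ × ℕ, x ∈ b mn.1 ∧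
      ∃ B : Set Omega1, ¬ B.Countable ∧
        ∀ β ∈ B, ∀ y ∈ b mn.1, ∀ q : SigmaOmegaPow, mn.2 ≤ q.1 β → ¬ Ψ q ≤ y := by
    intro x
    choose F hF1 hF2 using fun β => key β x
    obtain ⟨pr, hpr⟩ : ∃ pr : ℕ × ℕ, ¬ {β : Omega1 | F β = pr}.Countable := by
      by_contra hc
      push_neg at hc
      refine omega1_not_countable (Set.Countable.mono ?_ (Set.countable_iUnion hc))
      exact fun β _ => Set.mem_iUnion.2 ⟨F β, rfl⟩
    have hne : {β : Omega1 | F β = pr}.Nonempty := by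
      rcases Set.eq_empty_or_nonempty {β : Omega1 | F β = pr} with h | h
      · exact absurd (h ▸ Set.countable_empty) hpr
      · exact h
    obtain ⟨β₀, hβ₀⟩ := hne
    refine ⟨pr, hβ₀ ▸ hF1 β₀, {β : Omega1 | F β = pr}, hpr, ?_⟩
    intro β hβ y hy qq hq
    exact hF2 β y (by rw [hβ]; exact hy) qq (by rw [hβ]; exact hq)
  choose MN hmem BB hBBnc hBBprop using key2
  -- Step 5 : choose uncountable witness sets per pair.
  have hsel : ∀ pr : ℕ × ℕ, ∃ Bp : Set Omega1, ¬ Bp.Countable ∧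
      ∀ x : P, MN x = pr → ∀ β ∈ Bp, ∀ y ∈ b pr.1,
        ∀ q : SigmaOmegaPow, pr.2 ≤ q.1 β → ¬ Ψ q ≤ y := by
    intro pr
    by_cases hx : ∃ x : P, MN x = pr
    · obtain ⟨x₀, hx₀⟩ := hx
      refine ⟨BB x₀, hBBnc x₀, fun x _ β hβ => ?_⟩
      have := hBBprop x₀ β hβ
      rwa [hx₀] at this
    · exact ⟨Set.univ, omega1_not_countable, fun x hxx => absurd ⟨x, hxx⟩ hx⟩
  choose Bsel hnc hprop using hsel
  -- Step 6 : a strictly increasing transversal of the `Bsel`s.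
  obtain ⟨o0⟩ : Nonempty Omega1 := by
    refine ⟨⟨0, ?_⟩⟩
    rw [Cardinal.lt_ord, Ordinal.card_zero]
    exact (Cardinal.aleph_pos 1)
  let e : ℕ ≃ ℕ × ℕ := (Denumerable.eqv (ℕ × ℕ)).symm
  have hub : ∀ (k : ℕ) (γ : Omega1), ∃ β ∈ Bsel (e k), γ < β :=
    fun k γ => exists_gt_of_not_countable (hnc (e k)) γ
  let g : ℕ → Omega1 := pickSeq (fun k => Bsel (e k)) o0 hub
  have hg_mem : ∀ k, g k ∈ Bsel (e k) := pickSeq_mem _ o0 hub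
  have hg_inj : Function.Injective g := (pickSeq_strictMono _ o0 hub).injective
  -- Step 7 : the diagonal element of the Σ-product.
  have hsupp : {a : Omega1 |
      (fun o => if h : ∃ k, g k = o then (e h.choose).2 else 0) a ≠ 0}.Countable := by
    refine (Set.countable_range g).mono ?_
    intro a ha
    by_cases h : ∃ k, g k = a
    · obtain ⟨k, hk⟩ := h
      exact ⟨k, hk⟩
    · simp only [Set.mem_setOf_eq, dif_neg h] at ha
      exact absurd rfl ha
  let qstar : SigmaOmegaPow :=
    ⟨fun o => if h : ∃ k, g k = o then (e h.choose).2 else 0, hsupp⟩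
  have hqstar : ∀ k : ℕ, qstar.1 (g k) = (e k).2 := by
    intro k
    have hex : ∃ j, g j = g k := ⟨k, rfl⟩
    show (if h : ∃ j, g j = g k then (e h.choose).2 else 0) = (e k).2
    rw [dif_pos hex]
    have : hex.choose = k := hg_inj hex.choose_spec
    rw [this]
  -- Step 8 : the contradiction.
  set xstar : P := Ψ qstar with hxstar
  set k : ℕ := e.symm (MN xstar) with hk
  have hek : e k = MN xstar := e.apply_symm_apply (MN xstar)
  have hβmem : g k ∈ Bsel (MN xstar) := hek ▸ hg_mem k
  have hval : (MN xstar).2 ≤ qstar.1 (g k) := by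
    rw [hqstar k, hek]
  exact hprop (MN xstar) xstar rfl (g k) hβmem xstar (hmem xstar) qstar hval (le_refl _)
end
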